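/- arXiv:2406.04502 — 5 statements merged into one kernel-verified Lean document; each statement's English description precedes it below -/
import Mathlib

section
/- For all positive integers k and nonnegative integers n, m with appropriate ranges, the Stirling number of the second kind satisfies S(n+k, m) = ∑_{j=0}^{k-1} S(n+1, m-j) · ∑_{i=0}^{j} (-1)^i (m-i)^{k-1} / (i!·(j-i)!). -/
/-- `dStir n k` : the number of fixed-point-free permutations of an `n`-element set with
exactly `k` cycles (the unsigned associated Stirling number of the first kind). -/
noncomputable def dStir (n k : ℕ) : ℕ :=
  Nat.card {σ : Equiv.Perm (Fin n) // (∀ i, σ i ≠ i) ∧ Multiset.card σ.cycleType = k}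

/-- `stirling2 n m` : the Stirling number of the second kind, the number of partitions of an
`n`-element set into `m` nonempty blocks. -/
noncomputable def stirling2 (n m : ℕ) : ℕ :=
  Nat.card {P : Finpartition (Finset.univ : Finset (Fin n)) // P.parts.card = m}

open Finset

/-- recursive model of Stirling numbers of the second kind -/
def st : ℕ → ℕ → ℕ
  | 0, 0 => 1
  | 0, _+1 => 0
  | _+1, 0 => 0
  | n+1, b+1 => (b+1) * st n (b+1) + st n b

/-- the inner coefficient sums -/
noncomputable def dd (t j : ℕ) (m : ℚ) : ℚ :=
  ∑ i ∈ Finset.range (j + 1),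
    (-1 : ℚ) ^ i * (m - i) ^ t / (i.factorial * (j - i).factorial)

lemma dd_zero_right (t : ℕ) (m : ℚ) : dd t 0 m = m ^ t := by
  simp [dd]

lemma dd_succ_zero (t : ℕ) (m : ℚ) : dd (t+1) 0 m = m * dd t 0 m := by
  rw [dd_zero_right, dd_zero_right, pow_succ, mul_comm]

lemma dd_succ_succ (t j : ℕ) (m : ℚ) :
    dd (t+1) (j+1) m = m * dd t (j+1) m + dd t j (m-1) := by
  unfold dd
  rw [Finset.mul_sum]
  rw [Finset.sum_range_succ' (fun i => (-1:ℚ)^i * (m-i)^(t+1) / (i.factorial * (j+1-i).factorial)) (j+1)]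
  rw [Finset.sum_range_succ' (fun i => m * ((-1:ℚ)^i * (m-i)^t / (i.factorial * (j+1-i).factorial))) (j+1)]
  have hsum : ∑ i ∈ Finset.range (j+1),
      (-1:ℚ)^(i+1) * (m-((i+1:ℕ):ℚ))^(t+1) / ((i+1).factorial * (j+1-(i+1)).factorial)
      = ∑ i ∈ Finset.range (j+1),
        (m * ((-1:ℚ)^(i+1) * (m-((i+1:ℕ):ℚ))^t / ((i+1).factorial * (j+1-(i+1)).factorial))
          + (-1:ℚ)^i * (m-1-i)^t / (i.factorial * (j-i).factorial)) := by
    refine Finset.sum_congr rfl fun i hi => ?_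
    have hij : i ≤ j := by simpa [Nat.lt_succ_iff] using hi
    have h1 : j + 1 - (i+1) = j - i := by omega
    have hfi : ((i.factorial : ℚ)) ≠ 0 := by exact_mod_cast i.factorial_ne_zero
    have hfj : (((j-i).factorial : ℚ)) ≠ 0 := by exact_mod_cast (j-i).factorial_ne_zero
    have hfact : (((i+1).factorial : ℚ)) = ((i:ℚ)+1) * i.factorial := by
      rw [Nat.factorial_succ]; push_cast; ring
    rw [h1, hfact]
    have hX : m - ((i+1:ℕ):ℚ) = m - 1 - i := by push_cast; ring
    rw [hX]
    have hi1 : ((i:ℚ)+1) ≠ 0 := by positivity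
    field_simp
    ring
  rw [hsum, Finset.sum_add_distrib]
  simp only [Nat.sub_zero, Nat.cast_zero, sub_zero, Nat.factorial_zero, pow_succ]
  push_cast
  ring

lemma dd_eq_zero {t j : ℕ} (h : t < j) (m : ℚ) : dd t j m = 0 := by
  induction t generalizing j m with
  | zero =>
    obtain ⟨j', rfl⟩ : ∃ j', j = j' + 1 := ⟨j - 1, by omega⟩
    unfold dd
    have hterm : ∀ i ∈ Finset.range (j'+1+1),
        (-1:ℚ)^i * (m - i)^0 / (i.factorial * (j'+1-i).factorial)
        = ((-1:ℤ)^i * ((j'+1).choose i) : ℤ) / ((j'+1).factorial : ℚ) := by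
      intro i hi
      have hij : i ≤ j' + 1 := by simpa [Nat.lt_succ_iff] using hi
      have hcf : ((j'+1).choose i) * i.factorial * (j'+1-i).factorial = (j'+1).factorial :=
        Nat.choose_mul_factorial_mul_factorial hij
      have hfi : ((i.factorial : ℚ)) ≠ 0 := by exact_mod_cast i.factorial_ne_zero
      have hfj : (((j'+1-i).factorial : ℚ)) ≠ 0 := by exact_mod_cast (j'+1-i).factorial_ne_zero
      have hQ : ((j'+1).choose i : ℚ) * i.factorial * (j'+1-i).factorial = (j'+1).factorial := by
        exact_mod_cast congrArg (fun x : ℕ => (x : ℚ)) hcf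
      rw [pow_zero]
      have hF : (((j'+1).factorial : ℚ)) ≠ 0 := by exact_mod_cast (j'+1).factorial_ne_zero
      have key : (1:ℚ) / ((i.factorial : ℚ) * ((j'+1-i).factorial : ℚ))
          = (((j'+1).choose i : ℕ) : ℚ) / (((j'+1).factorial : ℕ) : ℚ) := by
        rw [div_eq_div_iff (by positivity) (by exact_mod_cast hF)]
        rw [one_mul]
        linear_combination -hQ
      push_cast
      simp only [mul_one]
      rw [div_eq_mul_one_div, key, mul_div_assoc]
    rw [Finset.sum_congr rfl hterm, ← Finset.sum_div]
    have : (∑ i ∈ Finset.range (j'+1+1), (((-1:ℤ)^i * ((j'+1).choose i) : ℤ) : ℚ)) = 0 := by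
      rw [← Int.cast_sum]
      norm_cast
      exact Int.alternating_sum_range_choose_of_ne (Nat.succ_ne_zero j')
    rw [this, zero_div]
  | succ t ih =>
    obtain ⟨j', rfl⟩ : ∃ j', j = j' + 1 := ⟨j - 1, by omega⟩
    rw [dd_succ_succ, ih (by omega), ih (by omega)]
    ring

section Combinatorics

variable {α : Type*} [DecidableEq α]

/-- number of partitions of a finset into `m` parts -/
noncomputable def pc (s : Finset α) (m : ℕ) : ℕ :=
  Nat.card {P : Finpartition s // P.parts.card = m}

instance finpartitionFinite (s : Finset α) : Finite (Finpartition s) := by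
  refine Finite.of_injective
    (fun P => (⟨P.parts, Finset.mem_powerset.2 fun t ht => Finset.mem_powerset.2 (P.le ht)⟩
      : {v : Finset (Finset α) // v ∈ s.powerset.powerset})) ?_
  intro P Q h
  exact Finpartition.ext (congrArg Subtype.val h)

lemma pc_empty_zero : pc (∅ : Finset α) 0 = 1 := by
  haveI : Unique {P : Finpartition (∅ : Finset α) // P.parts.card = 0} := by
    refine ⟨⟨⟨⊥, by simp⟩⟩, ?_⟩
    rintro ⟨P, hP⟩
    refine Subtype.ext (Finpartition.ext ?_)
    rw [Finpartition.parts_eq_empty_iff.2 rfl, Finpartition.parts_eq_empty_iff.2 rfl]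
  exact Nat.card_unique

lemma pc_empty_succ (m : ℕ) : pc (∅ : Finset α) (m+1) = 0 := by
  haveI : IsEmpty {P : Finpartition (∅ : Finset α) // P.parts.card = m+1} := by
    refine ⟨fun P => ?_⟩
    have h1 : P.1.parts = ∅ := Finpartition.parts_eq_empty_iff.2 Finset.bot_eq_empty.symm
    have h2 := P.2
    rw [h1] at h2
    simp at h2
  exact Nat.card_of_isEmpty

lemma pc_zero {s : Finset α} (hs : s.Nonempty) : pc s 0 = 0 := by
  haveI : IsEmpty {P : Finpartition s // P.parts.card = 0} := by
    refine ⟨fun P => ?_⟩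
    have h1 : P.1.parts = ∅ := Finset.card_eq_zero.1 P.2
    have h2 := Finpartition.parts_eq_empty_iff.1 h1
    rw [Finset.bot_eq_empty] at h2
    exact hs.ne_empty h2
  exact Nat.card_of_isEmpty

/-- delete the point `x` from a partition of `s` -/
def delP (x : α) {s : Finset α} (P : Finpartition s) : Finpartition (s.erase x) :=
  (P.avoid {x}).copy (Finset.erase_eq s x).symm

lemma mem_delP {x : α} {s : Finset α} {P : Finpartition s} {c : Finset α} :
    c ∈ (delP x P).parts ↔ ∃ d ∈ P.parts, ¬ d ≤ ({x} : Finset α) ∧ d \ {x} = c := by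
  rw [delP, Finpartition.copy_parts, Finpartition.mem_avoid]

lemma not_le_singleton {x : α} {s : Finset α} {P : Finpartition s} {d : Finset α}
    (hd : d ∈ P.parts) (hne : d ≠ {x}) : ¬ d ≤ ({x} : Finset α) := by
  intro h
  rcases Finset.subset_singleton_iff.1 h with h' | h'
  · exact P.bot_notMem (by rw [Finset.bot_eq_empty, ← h']; exact hd)
  · exact hne h'

lemma x_not_mem_of_ne {x : α} {s : Finset α} {P : Finpartition s} {d : Finset α}
    (hd : d ∈ P.parts) (hne : d ≠ P.part x) : x ∉ d :=
  fun hxd => hne (P.part_eq_of_mem hd hxd).symm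

lemma delP_parts_single {x : α} {s : Finset α} (P : Finpartition s) (hx : x ∈ s)
    (h : P.part x = {x}) : (delP x P).parts = P.parts.erase {x} := by
  ext c
  rw [mem_delP]
  constructor
  · rintro ⟨d, hd, hdle, rfl⟩
    have hdx : d ≠ {x} := fun h' => hdle (h' ▸ le_rfl)
    have hxd : x ∉ d := x_not_mem_of_ne hd (h ▸ hdx)
    rw [← Finset.erase_eq, Finset.erase_eq_of_notMem hxd]
    exact Finset.mem_erase.2 ⟨hdx, hd⟩
  · intro hc
    obtain ⟨hcx, hcp⟩ := Finset.mem_erase.1 hc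
    have hxc : x ∉ c := x_not_mem_of_ne hcp (h ▸ hcx)
    exact ⟨c, hcp, not_le_singleton hcp hcx,
      by rw [← Finset.erase_eq, Finset.erase_eq_of_notMem hxc]⟩

lemma delP_parts_big {x : α} {s : Finset α} (P : Finpartition s) (hx : x ∈ s)
    (h : P.part x ≠ {x}) :
    (delP x P).parts = insert (P.part x \ {x}) (P.parts.erase (P.part x)) := by
  ext c
  rw [mem_delP]
  constructor
  · rintro ⟨d, hd, hdle, rfl⟩
    by_cases hdp : d = P.part x
    · subst hdp
      exact Finset.mem_insert_self _ _
    · have hxd : x ∉ d := x_not_mem_of_ne hd hdp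
      have hde : d \ {x} = d := by rw [← Finset.erase_eq, Finset.erase_eq_of_notMem hxd]
      rw [hde]
      exact Finset.mem_insert_of_mem (Finset.mem_erase.2 ⟨hdp, hd⟩)
  · intro hc
    rcases Finset.mem_insert.1 hc with rfl | hc'
    · exact ⟨P.part x, P.part_mem.2 hx, not_le_singleton (P.part_mem.2 hx) h, rfl⟩
    · obtain ⟨hcp', hcp⟩ := Finset.mem_erase.1 hc'
      have hcx : c ≠ {x} := by
        rintro rfl
        exact h (P.part_eq_of_mem hcp (Finset.mem_singleton_self x))
      have hxc : x ∉ c := x_not_mem_of_ne hcp hcp'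
      exact ⟨c, hcp, not_le_singleton hcp hcx,
        by rw [← Finset.erase_eq, Finset.erase_eq_of_notMem hxc]⟩

lemma part_sdiff_nonempty {x : α} {s : Finset α} (P : Finpartition s) (hx : x ∈ s)
    (h : P.part x ≠ {x}) : (P.part x \ {x}).Nonempty := by
  rw [Finset.nonempty_iff_ne_empty]
  intro h'
  have hsub : P.part x ⊆ {x} := Finset.sdiff_eq_empty_iff_subset.1 h'
  rcases Finset.subset_singleton_iff.1 hsub with h'' | h''
  · exact P.bot_notMem (by rw [Finset.bot_eq_empty, ← h'']; exact P.part_mem.2 hx)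
  · exact h h''

lemma part_sdiff_not_mem {x : α} {s : Finset α} (P : Finpartition s) (hx : x ∈ s)
    (h : P.part x ≠ {x}) : P.part x \ {x} ∉ P.parts.erase (P.part x) := by
  intro hmem
  obtain ⟨hne, hmem'⟩ := Finset.mem_erase.1 hmem
  obtain ⟨y, hy⟩ := part_sdiff_nonempty P hx h
  obtain ⟨hy1, hy2⟩ := Finset.mem_sdiff.1 hy
  exact hne (P.eq_of_mem_parts hmem' (P.part_mem.2 hx) hy hy1)

/-- add `x` as a singleton part -/
def extQ (x : α) {s : Finset α} (hx : x ∈ s) (Q : Finpartition (s.erase x)) : Finpartition s :=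
  Q.extend (b := {x}) (by simp)
    (by rw [Finset.disjoint_singleton_right]; exact Finset.notMem_erase x s)
    (by rw [sup_eq_union, Finset.union_comm, ← Finset.insert_eq, Finset.insert_erase hx])

lemma extQ_parts (x : α) {s : Finset α} (hx : x ∈ s) (Q : Finpartition (s.erase x)) :
    (extQ x hx Q).parts = insert {x} Q.parts := rfl

lemma singleton_not_mem {x : α} {s : Finset α} (Q : Finpartition (s.erase x)) :
    ({x} : Finset α) ∉ Q.parts := by
  intro h
  exact Finset.notMem_erase x s (Q.le h (Finset.mem_singleton_self x))

lemma avoid_parts_of_mem {u : Finset α} (Q : Finpartition u) {t : Finset α} (ht : t ∈ Q.parts) :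
    (Q.avoid t).parts = Q.parts.erase t := by
  ext c
  rw [Finpartition.mem_avoid]
  constructor
  · rintro ⟨d, hd, hdle, rfl⟩
    have hdt : d ≠ t := fun h => hdle (h ▸ le_rfl)
    have hdisj : Disjoint d t := Q.disjoint hd ht hdt
    rw [Finset.sdiff_eq_self_iff_disjoint.2 hdisj]
    exact Finset.mem_erase.2 ⟨hdt, hd⟩
  · intro hc
    obtain ⟨hct, hcp⟩ := Finset.mem_erase.1 hc
    have hdisj : Disjoint c t := Q.disjoint hcp ht hct
    refine ⟨c, hcp, ?_, Finset.sdiff_eq_self_iff_disjoint.2 hdisj⟩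
    intro hle
    obtain ⟨y, hy⟩ := Q.nonempty_of_mem_parts hcp
    exact Finset.disjoint_left.1 hdisj hy (hle hy)

/-- insert `x` into the part `t` of a partition of `s.erase x` -/
def insP (x : α) {s : Finset α} (hx : x ∈ s) (Q : Finpartition (s.erase x)) (t : Finset α)
    (ht : t ∈ Q.parts) : Finpartition s :=
  (Q.avoid t).extend (b := insert x t) (by simp)
    (by
      rw [Finset.disjoint_insert_right]
      exact ⟨fun hmem => Finset.notMem_erase x s (Finset.mem_sdiff.1 hmem).1, sdiff_disjoint⟩)
    (by
      have hts : t ⊆ s.erase x := Q.le ht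
      ext a
      rw [sup_eq_union]
      simp only [Finset.mem_union, Finset.mem_sdiff, Finset.mem_insert, Finset.mem_erase]
      constructor
      · rintro (⟨⟨_, has⟩, _⟩ | (rfl | hat))
        · exact has
        · exact hx
        · exact (Finset.mem_erase.1 (hts hat)).2
      · intro has
        by_cases hax : a = x
        · exact Or.inr (Or.inl hax)
        · by_cases hat : a ∈ t
          · exact Or.inr (Or.inr hat)
          · exact Or.inl ⟨⟨hax, has⟩, hat⟩)

lemma insP_parts (x : α) {s : Finset α} (hx : x ∈ s) (Q : Finpartition (s.erase x))
    (t : Finset α) (ht : t ∈ Q.parts) :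
    (insP x hx Q t ht).parts = insert (insert x t) (Q.parts.erase t) := by
  show insert (insert x t) (Q.avoid t).parts = _
  rw [avoid_parts_of_mem Q ht]

lemma insert_not_mem_erase {x : α} {s : Finset α} (Q : Finpartition (s.erase x))
    {t u : Finset α} : insert x t ∉ Q.parts.erase u ∨ True := Or.inr trivial

lemma insert_x_not_mem {x : α} {s : Finset α} (Q : Finpartition (s.erase x)) {t : Finset α} :
    insert x t ∉ Q.parts := by
  intro h
  exact Finset.notMem_erase x s (Q.le h (Finset.mem_insert_self x t))

lemma R1 {x : α} {s : Finset α} (P : Finpartition s) (hx : x ∈ s) (h : P.part x = {x}) :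
    extQ x hx (delP x P) = P := by
  refine Finpartition.ext ?_
  rw [extQ_parts, delP_parts_single P hx h, Finset.insert_erase (h ▸ P.part_mem.2 hx)]

lemma sdiff_mem_delP {x : α} {s : Finset α} (P : Finpartition s) (hx : x ∈ s)
    (h : P.part x ≠ {x}) : P.part x \ {x} ∈ (delP x P).parts := by
  rw [delP_parts_big P hx h]
  exact Finset.mem_insert_self _ _

lemma insert_sdiff_part {x : α} {s : Finset α} (P : Finpartition s) (hx : x ∈ s) :
    insert x (P.part x \ {x}) = P.part x := by
  rw [← Finset.erase_eq, Finset.insert_erase (P.mem_part hx)]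

lemma R2 {x : α} {s : Finset α} (P : Finpartition s) (hx : x ∈ s) (h : P.part x ≠ {x}) :
    insP x hx (delP x P) (P.part x \ {x}) (sdiff_mem_delP P hx h) = P := by
  refine Finpartition.ext ?_
  rw [insP_parts, insert_sdiff_part P hx, delP_parts_big P hx h,
    Finset.erase_insert (part_sdiff_not_mem P hx h),
    Finset.insert_erase (P.part_mem.2 hx)]

lemma extQ_part {x : α} {s : Finset α} (hx : x ∈ s) (Q : Finpartition (s.erase x)) :
    (extQ x hx Q).part x = {x} :=
  Finpartition.part_eq_of_mem _ (by rw [extQ_parts]; exact Finset.mem_insert_self _ _)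
    (Finset.mem_singleton_self x)

lemma R3 {x : α} {s : Finset α} (hx : x ∈ s) (Q : Finpartition (s.erase x)) :
    delP x (extQ x hx Q) = Q := by
  refine Finpartition.ext ?_
  rw [delP_parts_single _ hx (extQ_part hx Q), extQ_parts,
    Finset.erase_insert (singleton_not_mem Q)]

lemma insP_part {x : α} {s : Finset α} (hx : x ∈ s) (Q : Finpartition (s.erase x))
    {t : Finset α} (ht : t ∈ Q.parts) : (insP x hx Q t ht).part x = insert x t :=
  Finpartition.part_eq_of_mem _ (by rw [insP_parts]; exact Finset.mem_insert_self _ _)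
    (Finset.mem_insert_self x t)

lemma insP_part_ne {x : α} {s : Finset α} (hx : x ∈ s) (Q : Finpartition (s.erase x))
    {t : Finset α} (ht : t ∈ Q.parts) : (insP x hx Q t ht).part x ≠ {x} := by
  rw [insP_part hx Q ht]
  obtain ⟨y, hy⟩ := Q.nonempty_of_mem_parts ht
  have hyx : y ≠ x := (Finset.mem_erase.1 (Q.le ht hy)).1
  intro h
  have : y ∈ insert x t := Finset.mem_insert_of_mem hy
  rw [h, Finset.mem_singleton] at this
  exact hyx this

lemma x_not_mem_t {x : α} {s : Finset α} (Q : Finpartition (s.erase x)) {t : Finset α}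
    (ht : t ∈ Q.parts) : x ∉ t :=
  fun hxt => Finset.notMem_erase x s (Q.le ht hxt)

lemma insP_sdiff {x : α} {s : Finset α} (hx : x ∈ s) (Q : Finpartition (s.erase x))
    {t : Finset α} (ht : t ∈ Q.parts) : (insP x hx Q t ht).part x \ {x} = t := by
  rw [insP_part hx Q ht, ← Finset.erase_eq, Finset.erase_insert (x_not_mem_t Q ht)]

lemma R4 {x : α} {s : Finset α} (hx : x ∈ s) (Q : Finpartition (s.erase x))
    {t : Finset α} (ht : t ∈ Q.parts) : delP x (insP x hx Q t ht) = Q := by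
  refine Finpartition.ext ?_
  rw [delP_parts_big _ hx (insP_part_ne hx Q ht), insP_sdiff hx Q ht,
    insP_part hx Q ht, insP_parts,
    Finset.erase_insert (by
      intro hmem
      exact insert_x_not_mem Q (Finset.mem_of_mem_erase hmem)),
    Finset.insert_erase ht]

lemma parts_card_pos {s : Finset α} (P : Finpartition s) {x : α} (hx : x ∈ s) :
    0 < P.parts.card :=
  Finset.card_pos.2 ⟨P.part x, P.part_mem.2 hx⟩

lemma delP_card_single {x : α} {s : Finset α} (P : Finpartition s) (hx : x ∈ s)
    (h : P.part x = {x}) : (delP x P).parts.card = P.parts.card - 1 := by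
  rw [delP_parts_single P hx h, Finset.card_erase_of_mem (h ▸ P.part_mem.2 hx)]

lemma delP_card_big {x : α} {s : Finset α} (P : Finpartition s) (hx : x ∈ s)
    (h : P.part x ≠ {x}) : (delP x P).parts.card = P.parts.card := by
  rw [delP_parts_big P hx h, Finset.card_insert_of_notMem (part_sdiff_not_mem P hx h),
    Finset.card_erase_of_mem (P.part_mem.2 hx)]
  have := parts_card_pos P hx
  omega

lemma extQ_card {x : α} {s : Finset α} (hx : x ∈ s) (Q : Finpartition (s.erase x)) :
    (extQ x hx Q).parts.card = Q.parts.card + 1 := by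
  rw [extQ_parts, Finset.card_insert_of_notMem (singleton_not_mem Q)]

lemma insP_card {x : α} {s : Finset α} (hx : x ∈ s) (Q : Finpartition (s.erase x))
    {t : Finset α} (ht : t ∈ Q.parts) : (insP x hx Q t ht).parts.card = Q.parts.card := by
  rw [insP_parts, Finset.card_insert_of_notMem (by
      intro hmem
      exact insert_x_not_mem Q (Finset.mem_of_mem_erase hmem)),
    Finset.card_erase_of_mem ht]
  have : 0 < Q.parts.card := Finset.card_pos.2 ⟨t, ht⟩
  omega

instance pairFinite (u : Finset α) (c : ℕ) :
    Finite {W : Finpartition u × Finset α // W.1.parts.card = c ∧ W.2 ∈ W.1.parts} := by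
  refine Finite.of_injective (fun W =>
    ((W.1.1 : Finpartition u),
      (⟨W.1.2, Finset.mem_powerset.2 (W.1.1.le W.2.2)⟩ : {v // v ∈ u.powerset}))) ?_
  rintro ⟨⟨a, b⟩, h⟩ ⟨⟨a2, b2⟩, h2⟩ heq
  have h1 : a = a2 := congrArg Prod.fst heq
  have hb : b = b2 := congrArg Subtype.val (congrArg Prod.snd heq)
  subst h1; subst hb; rfl

/-- the central bijection -/
noncomputable def mainEquiv {x : α} {s : Finset α} (hx : x ∈ s) (b : ℕ) :
    {P : Finpartition s // P.parts.card = b + 1} ≃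
      ({Q : Finpartition (s.erase x) // Q.parts.card = b} ⊕
       {W : Finpartition (s.erase x) × Finset α //
         W.1.parts.card = b + 1 ∧ W.2 ∈ W.1.parts}) where
  toFun P :=
    if h : P.1.part x = {x} then
      Sum.inl ⟨delP x P.1, by rw [delP_card_single P.1 hx h, P.2]; omega⟩
    else
      Sum.inr ⟨(delP x P.1, P.1.part x \ {x}),
        by rw [delP_card_big P.1 hx h, P.2], sdiff_mem_delP P.1 hx h⟩
  invFun z :=
    z.elim (fun Q => ⟨extQ x hx Q.1, by rw [extQ_card hx Q.1, Q.2]⟩)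
      (fun W => ⟨insP x hx W.1.1 W.1.2 W.2.2, by rw [insP_card hx W.1.1 W.2.2, W.2.1]⟩)
  left_inv := by
    rintro ⟨P, hP⟩
    by_cases h : P.part x = {x}
    · simp only [dif_pos h, Sum.elim_inl]
      exact Subtype.ext (R1 P hx h)
    · simp only [dif_neg h, Sum.elim_inr]
      exact Subtype.ext (R2 P hx h)
  right_inv := by
    rintro (⟨Q, hQ⟩ | ⟨⟨Q, t⟩, hQ, ht⟩)
    · simp only [Sum.elim_inl, dif_pos (extQ_part hx Q)]
      refine (dif_pos (extQ_part hx Q)).trans ?_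
      exact congrArg Sum.inl (Subtype.ext (R3 hx Q))
    · simp only [Sum.elim_inr, dif_neg (insP_part_ne hx Q ht)]
      refine (dif_neg (insP_part_ne hx Q ht)).trans ?_
      refine congrArg Sum.inr (Subtype.ext ?_)
      exact Prod.ext (R4 hx Q ht) (insP_sdiff hx Q ht)

lemma count_pairs (u : Finset α) (c : ℕ) :
    Nat.card {W : Finpartition u × Finset α // W.1.parts.card = c ∧ W.2 ∈ W.1.parts}
      = c * Nat.card {Q : Finpartition u // Q.parts.card = c} := by
  have e : {W : Finpartition u × Finset α // W.1.parts.card = c ∧ W.2 ∈ W.1.parts}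
      ≃ Σ Q : {Q : Finpartition u // Q.parts.card = c}, {t // t ∈ Q.1.parts} :=
    { toFun := fun W => ⟨⟨W.1.1, W.2.1⟩, ⟨W.1.2, W.2.2⟩⟩
      invFun := fun z => ⟨(z.1.1, z.2.1), z.1.2, z.2.2⟩
      left_inv := fun W => rfl
      right_inv := fun z => rfl }
  rw [Nat.card_congr e]
  letI : Fintype {Q : Finpartition u // Q.parts.card = c} := Fintype.ofFinite _
  rw [Nat.card_eq_fintype_card, Nat.card_eq_fintype_card, Fintype.card_sigma]
  have : ∀ Q : {Q : Finpartition u // Q.parts.card = c},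
      Fintype.card {t // t ∈ Q.1.parts} = c := by
    intro Q
    rw [Fintype.card_coe]
    exact Q.2
  rw [Finset.sum_congr rfl (fun Q _ => this Q), Finset.sum_const, smul_eq_mul, mul_comm]
  rfl

lemma pc_rec {x : α} {s : Finset α} (hx : x ∈ s) (b : ℕ) :
    pc s (b+1) = (b+1) * pc (s.erase x) (b+1) + pc (s.erase x) b := by
  rw [pc, Nat.card_congr (mainEquiv hx b), Nat.card_sum, count_pairs]
  rw [pc, pc, add_comm]

lemma pc_eq_st : ∀ (n : ℕ) (s : Finset α), s.card = n → ∀ m, pc s m = st n m := by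
  intro n
  induction n with
  | zero =>
    intro s hs m
    rw [Finset.card_eq_zero.1 hs]
    match m with
    | 0 => exact pc_empty_zero
    | m+1 => exact pc_empty_succ m
  | succ n ih =>
    intro s hs m
    have hne : s.Nonempty := Finset.card_pos.1 (by omega)
    obtain ⟨x, hx⟩ := hne
    match m with
    | 0 => exact (pc_zero ⟨x, hx⟩).trans rfl
    | b+1 =>
      have hcard : (s.erase x).card = n := by
        rw [Finset.card_erase_of_mem hx, hs]
        omega
      rw [pc_rec hx b, ih (s.erase x) hcard (b+1), ih (s.erase x) hcard b]
      rfl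

end Combinatorics

lemma stirling2_eq (n m : ℕ) : stirling2 n m = st n m := by
  have h : stirling2 n m = pc (Finset.univ : Finset (Fin n)) m := rfl
  rw [h, pc_eq_st n Finset.univ (by simp) m]

lemma aux (t : ℕ) : ∀ n m : ℕ, (st (n+t+1) m : ℚ)
    = ∑ j ∈ Finset.range (t+1), (st (n+1) (m-j) : ℚ) * dd t j (m : ℚ) := by
  induction t with
  | zero => intro n m; simp [dd_zero_right]
  | succ t ih =>
    intro n m
    match m with
    | 0 =>
      have h0 : ∀ a : ℕ, st (a+1) 0 = 0 := fun a => rfl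
      have : n + (t+1) + 1 = (n + t + 1) + 1 := by ring
      rw [this, h0]
      simp only [Nat.zero_sub, h0 n, Nat.cast_zero, zero_mul, Finset.sum_const_zero]
    | m'+1 =>
      set m : ℕ := m' + 1 with hm
      have key : st (n+(t+1)+1) m = m * st (n+t+1) m + st (n+t+1) m' := by
        have : n + (t+1) + 1 = (n+t+1) + 1 := by ring
        rw [this]; rfl
      have cast1 : ((m':ℕ) : ℚ) = (m : ℚ) - 1 := by push_cast [hm]; ring
      have lhs : (st (n+(t+1)+1) m : ℚ)
          = (m:ℚ) * (st (n+t+1) m : ℚ) + (st (n+t+1) m' : ℚ) := by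
        rw [key]; push_cast; ring
      rw [lhs, ih n m, ih n m', cast1]
      conv_rhs => rw [Finset.sum_range_succ'
        (fun j => (st (n+1) (m-j):ℚ) * dd (t+1) j (m:ℚ)) (t+1)]
      have hG : ∀ j ∈ Finset.range (t+1),
          (st (n+1) (m-(j+1)) : ℚ) * dd (t+1) (j+1) (m:ℚ)
          = (m:ℚ) * ((st (n+1) (m-(j+1)) : ℚ) * dd t (j+1) (m:ℚ))
            + (st (n+1) (m'-j) : ℚ) * dd t j ((m:ℚ)-1) := by
        intro j _
        rw [dd_succ_succ]
        have : m - (j+1) = m' - j := by omega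
        rw [this]
        ring
      rw [Finset.sum_congr rfl hG, Finset.sum_add_distrib, ← Finset.mul_sum]
      have expand : (m:ℚ) * (∑ j ∈ Finset.range (t+1),
              (st (n+1) (m-(j+1)) : ℚ) * dd t (j+1) (m:ℚ))
            + (st (n+1) (m-0) : ℚ) * dd (t+1) 0 (m:ℚ)
          = (m:ℚ) * ∑ j ∈ Finset.range (t+1), (st (n+1) (m-j) : ℚ) * dd t j (m:ℚ) := by
        rw [dd_succ_zero, show ((st (n+1) (m-0):ℚ)) * ((m:ℚ) * dd t 0 (m:ℚ))
            = (m:ℚ) * ((st (n+1) (m-0):ℚ) * dd t 0 (m:ℚ)) by ring, ← mul_add,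
          ← Finset.sum_range_succ' (fun j => (st (n+1) (m-j) : ℚ) * dd t j (m:ℚ)) (t+1),
          Finset.sum_range_succ]
        rw [dd_eq_zero (Nat.lt_succ_self t)]
        ring
      rw [← expand]
      ring

theorem stmt1 (k n m : ℕ) (hk : 1 ≤ k) :
    (stirling2 (n + k) m : ℚ)
      = ∑ j ∈ Finset.range k, (stirling2 (n + 1) (m - j) : ℚ) *
          ∑ i ∈ Finset.range (j + 1),
            (-1 : ℚ) ^ i * ((m : ℚ) - i) ^ (k - 1) /
              (i.factorial * (j - i).factorial) := by
  obtain ⟨t, rfl⟩ : ∃ t, k = t + 1 := ⟨k - 1, by omega⟩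
  have hr : ∀ j i : ℕ, True := fun _ _ => trivial
  have : (n + (t+1)) = n + t + 1 := by ring
  rw [this, stirling2_eq]
  rw [aux t n m]
  refine Finset.sum_congr rfl fun j _ => ?_
  rw [stirling2_eq]
  simp [dd]
end

section
/- Define H(m,k) = ∑ over compositions (j_1,...,j_k) of m with each j_i ≥ 1 of the product ∏_{i=1}^k 1/(j_i+1). Then for all n, k with n ≥ k ≥ 1, we have n·H(n-k, k) = k·H(n-k-1, k-1) + (n-1)·H(n-k-1, k). -/
/-- Compositions of `m` into `k` positive parts, as functions `Fin k → ℕ`. -/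
def comps (m k : ℕ) : Finset (Fin k → ℕ) :=
  (Fintype.piFinset fun _ => Finset.Icc 1 m).filter fun j => ∑ i, j i = m

/-- `Hsum m k = ∑_{j₁+⋯+j_k = m, jᵢ ≥ 1} ∏ᵢ 1/(jᵢ+1)`. -/
def Hsum (m k : ℕ) : ℚ :=
  ∑ j ∈ comps m k, ∏ i, ((j i : ℚ) + 1)⁻¹

/-- `Hsum` extended to an integer first argument (zero for negative arguments). -/
def Hsum' (m : ℤ) (k : ℕ) : ℚ :=
  if 0 ≤ m then Hsum m.toNat k else 0

open Finset

lemma mem_comps {m k : ℕ} {j : Fin k → ℕ} :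
    j ∈ comps m k ↔ (∀ i, 1 ≤ j i) ∧ ∑ i, j i = m := by
  simp only [comps, mem_filter, Fintype.mem_piFinset, Finset.mem_Icc]
  constructor
  · rintro ⟨h1, h2⟩
    exact ⟨fun i => (h1 i).1, h2⟩
  · rintro ⟨h1, h2⟩
    refine ⟨fun i => ⟨h1 i, ?_⟩, h2⟩
    exact h2 ▸ Finset.single_le_sum (f := j) (fun _ _ => Nat.zero_le _) (mem_univ i)

lemma inv_ne (a : ℕ) : ((a : ℚ) + 1)⁻¹ ≠ 0 := by positivity

/-- Multiplying `Hsum m k` by `m + k` distributes the factor `∑ (jᵢ+1)` over the sum. -/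
lemma mulH (m k : ℕ) :
    ((m : ℚ) + k) * Hsum m k
      = ∑ j ∈ comps m k, ∑ i, ∏ i' ∈ univ.erase i, ((j i' : ℚ) + 1)⁻¹ := by
  rw [Hsum, Finset.mul_sum]
  refine sum_congr rfl fun j hj => ?_
  have hsum : ∑ i, ((j i : ℚ) + 1) = (m : ℚ) + k := by
    rw [Finset.sum_add_distrib]
    have := (mem_comps.mp hj).2
    have : ((∑ i, j i : ℕ) : ℚ) = (m : ℚ) := by rw [this]
    push_cast at this
    simp [this, Finset.card_univ]
  rw [← hsum, Finset.sum_mul]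
  refine sum_congr rfl fun i _ => ?_
  rw [← Finset.mul_prod_erase univ _ (mem_univ i), ← mul_assoc,
    mul_inv_cancel₀ (by positivity), one_mul]

lemma prod_erase_eq {k : ℕ} (i : Fin (k + 1)) (f : Fin (k + 1) → ℚ) (hf : f i ≠ 0) :
    ∏ i' ∈ univ.erase i, f i' = ∏ t : Fin k, f (i.succAbove t) := by
  refine mul_left_cancel₀ hf ?_
  rw [Finset.mul_prod_erase univ f (mem_univ i), Fin.prod_univ_succAbove f i]

lemma keyB {m k' : ℕ} (hm : 1 ≤ m) (i : Fin (k' + 1)) :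
    ∑ j ∈ comps m (k' + 1), ∏ i' ∈ univ.erase i, ((j i' : ℚ) + 1)⁻¹
      = Hsum (m - 1) k'
        + ∑ j ∈ comps (m - 1) (k' + 1), ∏ i' ∈ univ.erase i, ((j i' : ℚ) + 1)⁻¹ := by
  classical
  rw [← Finset.sum_filter_add_sum_filter_not (comps m (k' + 1)) (fun j => j i = 1)]
  congr 1
  · -- part with `j i = 1` equals `Hsum (m-1) k'`
    rw [Hsum]
    refine Finset.sum_nbij' (fun j => i.removeNth j) (fun j' => i.insertNth 1 j')
      ?_ ?_ ?_ ?_ ?_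
    · intro j hj
      obtain ⟨hj, hji⟩ := mem_filter.mp hj
      obtain ⟨h1, h2⟩ := mem_comps.mp hj
      refine mem_comps.mpr ⟨fun t => h1 _, ?_⟩
      have := Fin.sum_univ_succAbove (fun i' => j i') i
      rw [h2, hji] at this
      simp only [Fin.removeNth]
      omega
    · intro j' hj'
      obtain ⟨h1, h2⟩ := mem_comps.mp hj'
      refine mem_filter.mpr ⟨mem_comps.mpr ⟨?_, ?_⟩, by simp⟩
      · rw [i.forall_iff_succAbove]
        constructor
        · simp
        · intro t; simpa using h1 t
      · have := Fin.sum_univ_succAbove (fun i' => i.insertNth 1 j' i') i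
        simp only [Fin.insertNth_apply_same, Fin.insertNth_apply_succAbove] at this
        rw [this, h2]
        omega
    · intro j hj
      obtain ⟨_, hji⟩ := mem_filter.mp hj
      have h := Fin.insertNth_self_removeNth (α := fun _ => ℕ) i j
      rw [hji] at h
      exact h
    · intro j' _
      exact Fin.removeNth_insertNth (α := fun _ => ℕ) i 1 j'
    · intro j hj
      rw [prod_erase_eq i _ (inv_ne _)]
      rfl
  · -- part with `j i ≠ 1` matches `comps (m-1) (k'+1)` by decreasing coordinate `i`
    refine Finset.sum_nbij' (fun j => Function.update j i (j i - 1))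
      (fun j' => Function.update j' i (j' i + 1)) ?_ ?_ ?_ ?_ ?_
    · intro j hj
      obtain ⟨hj, hji⟩ := mem_filter.mp hj
      obtain ⟨h1, h2⟩ := mem_comps.mp hj
      have hji2 : 2 ≤ j i := by have := h1 i; omega
      refine mem_comps.mpr ⟨?_, ?_⟩
      · intro i'
        rcases eq_or_ne i' i with rfl | h
        · simp [Function.update_apply]; omega
        · simp [Function.update_apply, h]; exact h1 i'
      · have hsplit := Finset.add_sum_erase univ j (mem_univ i)
        simp only [Finset.sum_update_of_mem (mem_univ i), ← Finset.erase_eq]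
        omega
    · intro j' hj'
      obtain ⟨h1, h2⟩ := mem_comps.mp hj'
      refine mem_filter.mpr ⟨mem_comps.mpr ⟨?_, ?_⟩, ?_⟩
      · intro i'
        rcases eq_or_ne i' i with rfl | h
        · simp [Function.update_apply]
        · simp [Function.update_apply, h]; exact h1 i'
      · have hsplit := Finset.add_sum_erase univ j' (mem_univ i)
        simp only [Finset.sum_update_of_mem (mem_univ i), ← Finset.erase_eq]
        omega
      · simp only [Function.update_self]
        have := h1 i
        omega
    · intro j hj
      obtain ⟨hj', hji⟩ := mem_filter.mp hj
      have h1 := (mem_comps.mp hj').1 i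
      funext i'
      rcases eq_or_ne i' i with rfl | h
      · simp [Function.update_apply]; omega
      · simp [Function.update_apply, h]
    · intro j' hj'
      funext i'
      rcases eq_or_ne i' i with rfl | h
      · simp [Function.update_apply]
      · simp [Function.update_apply, h]
    · intro j hj
      refine Finset.prod_congr rfl fun i' hi' => ?_
      simp [Function.update_apply, (mem_erase.mp hi').1]

lemma recur {m k' : ℕ} (hm : 1 ≤ m) :
    ((m : ℚ) + (k' + 1)) * Hsum m (k' + 1)
      = ((k' : ℚ) + 1) * Hsum (m - 1) k'
        + ((m : ℚ) - 1 + (k' + 1)) * Hsum (m - 1) (k' + 1) := by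
  have hcast : ((m - 1 : ℕ) : ℚ) = (m : ℚ) - 1 := by
    rw [Nat.cast_sub hm]; norm_num
  have h := mulH m (k' + 1)
  push_cast at h
  have h2 := mulH (m - 1) (k' + 1)
  rw [hcast] at h2
  push_cast at h2
  rw [h, Finset.sum_comm, Finset.sum_congr rfl (fun i _ => keyB hm i),
    Finset.sum_add_distrib, Finset.sum_const, Finset.card_univ, Fintype.card_fin,
    Finset.sum_comm, ← h2]
  simp only [nsmul_eq_mul]
  push_cast
  ring

lemma Hsum_zero (k : ℕ) (hk : 1 ≤ k) : Hsum 0 k = 0 := by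
  rw [Hsum]
  have : comps 0 k = ∅ := by
    refine Finset.eq_empty_of_forall_notMem fun j hj => ?_
    obtain ⟨h1, h2⟩ := mem_comps.mp hj
    have : 1 ≤ ∑ i, j i :=
      le_trans (h1 ⟨0, hk⟩) (Finset.single_le_sum (fun _ _ => Nat.zero_le _) (mem_univ _))
    omega
  simp [this]

theorem stmt2 (n k : ℕ) (hk : 1 ≤ k) (hn : k ≤ n) :
    (n : ℚ) * Hsum' ((n : ℤ) - k) k
      = (k : ℚ) * Hsum' ((n : ℤ) - k - 1) (k - 1)
        + ((n : ℚ) - 1) * Hsum' ((n : ℤ) - k - 1) k := by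
  obtain ⟨k', rfl⟩ : ∃ k', k = k' + 1 := ⟨k - 1, by omega⟩
  set m : ℕ := n - (k' + 1) with hm
  have hnk : (n : ℤ) - ((k' + 1 : ℕ) : ℤ) = (m : ℤ) := by push_cast; omega
  rcases Nat.eq_zero_or_pos m with hm0 | hm1
  · -- n = k case
    rw [hnk, hm0]
    have h1 : Hsum' ((0 : ℕ) : ℤ) (k' + 1) = Hsum 0 (k' + 1) := by
      simp [Hsum']
    rw [h1, Hsum_zero _ (by omega)]
    have : ((0 : ℕ) : ℤ) - 1 = -1 := by norm_num
    rw [this]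
    simp [Hsum']
  · have h1 : Hsum' ((m : ℤ)) (k' + 1) = Hsum m (k' + 1) := by simp [Hsum']
    have h2 : (m : ℤ) - 1 = ((m - 1 : ℕ) : ℤ) := by omega
    have h3 : ∀ k'', Hsum' ((m : ℤ) - 1) k'' = Hsum (m - 1) k'' := by
      intro k''
      rw [h2]
      simp [Hsum']
    rw [hnk, h1, h3, h3]
    have hncast : (n : ℚ) = (m : ℚ) + (k' + 1) := by
      have : n = m + (k' + 1) := by omega
      rw [this]; push_cast; ring
    rw [hncast, recur hm1]
    push_cast
    ring
end

section
/- With H(m,k) = ∑_{j_1+...+j_k=m, j_i≥1} ∏_{i=1}^k 1/(j_i+1), we have H(n-k, k) = (k!/n!) · d(n,k), where d(n,k) is the number of derangements of [n] with exactly k cycles. -/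
namespace Stmt3Aux

open Equiv Equiv.Perm Finset

variable {n k : ℕ}

/-- Compositions of `n` into `k` parts each at least 2. -/
def comps2 (n k : ℕ) : Finset (Fin k → ℕ) :=
  (Fintype.piFinset fun _ => Finset.Icc 2 n).filter fun c => ∑ i, c i = n

lemma mem_comps2 {c : Fin k → ℕ} :
    c ∈ comps2 n k ↔ (∀ i, 2 ≤ c i ∧ c i ≤ n) ∧ ∑ i, c i = n := by
  simp [comps2, Fintype.mem_piFinset, Finset.mem_Icc, forall_and]

lemma list_prod_apply_eq_self {β : Type*} {l : List (Equiv.Perm β)} {x : β}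
    (h : ∀ g ∈ l, g x = x) : l.prod x = x := by
  induction l with
  | nil => simp
  | cons a t ih =>
    simp only [List.prod_cons, Equiv.Perm.mul_apply]
    rw [ih fun g hg => h g (List.mem_cons_of_mem _ hg), h a List.mem_cons_self]

lemma list_prod_apply_of_mem {β : Type*} {l : List (Equiv.Perm β)}
    (hd : l.Pairwise Equiv.Perm.Disjoint) {g : Equiv.Perm β} (hg : g ∈ l) {x : β}
    (hx : g x ≠ x) : l.prod x = g x := by
  induction l with
  | nil => simp at hg
  | cons a t ih =>
    rw [List.pairwise_cons] at hd
    rcases List.mem_cons.mp hg with rfl | hgt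
    · rw [List.prod_cons, Equiv.Perm.mul_apply,
        list_prod_apply_eq_self fun p hp => ?_]
      rcases hd.1 p hp x with h | h
      · exact absurd h hx
      · exact h
    · rw [List.prod_cons, Equiv.Perm.mul_apply, ih hd.2 hgt]
      rcases hd.1 g hgt (g x) with h | h
      · exact h
      · exact absurd (g.injective h) hx

section PsiDef

variable (c : Fin k → ℕ) (f : (Σ i : Fin k, Fin (c i)) ≃ Fin n)

/-- the list of elements of the `i`-th block. -/
def Lo (i : Fin k) : List (Fin n) := List.ofFn fun j : Fin (c i) => f ⟨i, j⟩

lemma length_Lo (i : Fin k) : (Lo c f i).length = c i := by simp [Lo]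

lemma nodup_Lo (i : Fin k) : (Lo c f i).Nodup := by
  rw [Lo, List.nodup_ofFn]
  intro a b hab
  simpa using f.injective hab

lemma mem_Lo {i : Fin k} {x : Fin n} : x ∈ Lo c f i ↔ ∃ j, f ⟨i, j⟩ = x := by
  simp [Lo, List.mem_ofFn, Set.mem_range]

variable {c}

lemma ne_singleton_Lo {i : Fin k} (h2 : 2 ≤ c i) (x : Fin n) : Lo c f i ≠ [x] := by
  intro h
  apply_fun List.length at h
  rw [length_Lo] at h
  simp at h
  omega

lemma support_Lo {i : Fin k} (h2 : 2 ≤ c i) :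
    (Lo c f i).formPerm.support = (Lo c f i).toFinset :=
  List.support_formPerm_of_nodup _ (nodup_Lo c f i) (ne_singleton_Lo f h2)

lemma isCycle_Lo {i : Fin k} (h2 : 2 ≤ c i) : (Lo c f i).formPerm.IsCycle :=
  List.isCycle_formPerm (nodup_Lo c f i) (by rw [length_Lo]; exact h2)

lemma disjoint_Lo {i i' : Fin k} (h2 : 2 ≤ c i) (h2' : 2 ≤ c i') (hii : i ≠ i') :
    (Lo c f i).formPerm.Disjoint (Lo c f i').formPerm := by
  rw [Equiv.Perm.disjoint_iff_disjoint_support, support_Lo f h2, support_Lo f h2',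
    Finset.disjoint_left]
  intro x hx hx'
  rw [List.mem_toFinset, mem_Lo] at hx hx'
  obtain ⟨j, rfl⟩ := hx
  obtain ⟨j', hj'⟩ := hx'
  exact hii (congrArg Sigma.fst (f.injective hj')).symm

variable (c)

/-- the permutation associated to a composition and an enumeration. -/
def Psi : Equiv.Perm (Fin n) := (List.ofFn fun i => (Lo c f i).formPerm).prod

variable {c} {f}

lemma pairwise_Lo (hc : ∀ i, 2 ≤ c i) :
    (List.ofFn fun i => (Lo c f i).formPerm).Pairwise Equiv.Perm.Disjoint :=
  List.pairwise_ofFn.mpr fun i j hij => disjoint_Lo f (hc i) (hc j) (ne_of_lt hij)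

lemma Psi_apply (hc : ∀ i, 2 ≤ c i) (i : Fin k) (j : Fin (c i)) :
    Psi c f (f ⟨i, j⟩) = (Lo c f i).formPerm (f ⟨i, j⟩) := by
  have hmem : f ⟨i, j⟩ ∈ (Lo c f i).formPerm.support := by
    rw [support_Lo f (hc i), List.mem_toFinset, mem_Lo]
    exact ⟨j, rfl⟩
  exact list_prod_apply_of_mem (pairwise_Lo hc)
    (List.mem_ofFn.mpr ⟨i, rfl⟩) (Equiv.Perm.mem_support.mp hmem)

lemma Psi_ne (hc : ∀ i, 2 ≤ c i) (x : Fin n) : Psi c f x ≠ x := by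
  obtain ⟨⟨i, j⟩, rfl⟩ : ∃ p, f p = x := ⟨f.symm x, f.apply_symm_apply x⟩
  rw [Psi_apply hc]
  have hmem : f ⟨i, j⟩ ∈ (Lo c f i).formPerm.support := by
    rw [support_Lo f (hc i), List.mem_toFinset, mem_Lo]
    exact ⟨j, rfl⟩
  exact Equiv.Perm.mem_support.mp hmem

lemma cycleType_Psi (hc : ∀ i, 2 ≤ c i) :
    (Psi c f).cycleType = ↑(List.ofFn c) := by
  rw [Psi, Equiv.Perm.cycleType_eq _ rfl (fun g hg => ?_) (pairwise_Lo hc)]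
  · congr 1
    rw [List.map_ofFn]
    congr 1
    funext i
    simp only [Function.comp_apply]
    rw [support_Lo f (hc i), List.toFinset_card_of_nodup (nodup_Lo c f i), length_Lo]
  · obtain ⟨i, rfl⟩ := List.mem_ofFn.mp hg
    exact isCycle_Lo f (hc i)

lemma card_cycleType_Psi (hc : ∀ i, 2 ≤ c i) :
    Multiset.card (Psi c f).cycleType = k := by
  rw [cycleType_Psi hc]
  simp

lemma prod_cycleType_Psi (hc : ∀ i, 2 ≤ c i) :
    (Psi c f).cycleType.prod = ∏ i, c i := by
  rw [cycleType_Psi hc, Multiset.prod_coe, List.prod_ofFn]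

lemma formPerm_Lo_mem_cycleFactors (hc : ∀ i, 2 ≤ c i) (i : Fin k) :
    (Lo c f i).formPerm ∈ (Psi c f).cycleFactorsFinset := by
  rw [Equiv.Perm.mem_cycleFactorsFinset_iff]
  refine ⟨isCycle_Lo f (hc i), fun x hx => ?_⟩
  rw [support_Lo f (hc i), List.mem_toFinset, mem_Lo] at hx
  obtain ⟨j, rfl⟩ := hx
  exact (Psi_apply hc i j).symm

end PsiDef

/-- the subtype of fixed-point-free permutations with `k` cycles. -/
abbrev Dt (n k : ℕ) :=
  {σ : Equiv.Perm (Fin n) // (∀ i, σ i ≠ i) ∧ Multiset.card σ.cycleType = k}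

/-- the total space. -/
abbrev Tt (n k : ℕ) :=
  Σ cc : {c : Fin k → ℕ // c ∈ comps2 n k}, ((Σ i : Fin k, Fin (cc.1 i)) ≃ Fin n)

lemma hc_of_mem {c : Fin k → ℕ} (hc : c ∈ comps2 n k) : ∀ i, 2 ≤ c i :=
  fun i => ((mem_comps2.mp hc).1 i).1

noncomputable def PsiD (t : Tt n k) : Dt n k :=
  ⟨Psi t.1.1 t.2, Psi_ne (hc_of_mem t.1.2), card_cycleType_Psi (hc_of_mem t.1.2)⟩

lemma Tt_inj2 {a a' : {c : Fin k → ℕ // c ∈ comps2 n k}}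
    {f : (Σ i : Fin k, Fin (a.1 i)) ≃ Fin n} {f' : (Σ i : Fin k, Fin (a'.1 i)) ≃ Fin n}
    (h : (⟨a, f⟩ : Tt n k) = ⟨a', f'⟩) :
    ∀ (i : Fin k) (j : ℕ) (hj : j < a.1 i) (hj' : j < a'.1 i),
      f ⟨i, ⟨j, hj⟩⟩ = f' ⟨i, ⟨j, hj'⟩⟩ := by
  have ha : a = a' := congrArg Sigma.fst h
  subst ha
  have hf : f = f' := eq_of_heq (Sigma.mk.inj_iff.mp h).2
  subst hf
  intro i j hj hj'
  rfl

lemma Tt_ext {a a' : {c : Fin k → ℕ // c ∈ comps2 n k}}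
    {f : (Σ i : Fin k, Fin (a.1 i)) ≃ Fin n} {f' : (Σ i : Fin k, Fin (a'.1 i)) ≃ Fin n}
    (h : a = a')
    (h2 : ∀ (i : Fin k) (j : ℕ) (hj : j < a.1 i) (hj' : j < a'.1 i),
      f ⟨i, ⟨j, hj⟩⟩ = f' ⟨i, ⟨j, hj'⟩⟩) :
    (⟨a, f⟩ : Tt n k) = ⟨a', f'⟩ := by
  subst h
  suffices hff : f = f' by rw [hff]
  apply Equiv.ext
  rintro ⟨i, ⟨j, hj⟩⟩
  exact h2 i j hj hj


section Fiber

/-- orderings of the cycles of `σ` together with a starting point in each cycle. -/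
abbrev Fib (σ : Equiv.Perm (Fin n)) (k : ℕ) :=
  {p : (Fin k ≃ {g // g ∈ σ.cycleFactorsFinset}) × (Fin k → Fin n) //
    ∀ i, p.2 i ∈ (↑(p.1 i) : Equiv.Perm (Fin n)).support}

variable (s : Dt n k)

lemma support_eq_univ : s.1.support = Finset.univ :=
  Finset.eq_univ_iff_forall.mpr fun x => Equiv.Perm.mem_support.mpr (s.2.1 x)

lemma card_factors : s.1.cycleFactorsFinset.card = k := by
  have h := s.2.2
  rw [Equiv.Perm.cycleType_def, Multiset.card_map] at h
  exact h

/-- the `i`-th cycle. -/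
def cyc (p : Fib s.1 k) (i : Fin k) : Equiv.Perm (Fin n) := ↑(p.1.1 i)

lemma cyc_mem (p : Fib s.1 k) (i : Fin k) : cyc s p i ∈ s.1.cycleFactorsFinset :=
  (p.1.1 i).2

lemma isCycle_cyc (p : Fib s.1 k) (i : Fin k) : (cyc s p i).IsCycle :=
  (Equiv.Perm.mem_cycleFactorsFinset_iff.mp (cyc_mem s p i)).1

lemma x_mem (p : Fib s.1 k) (i : Fin k) : p.1.2 i ∈ (cyc s p i).support := p.2 i

lemma cyc_ne (p : Fib s.1 k) {i i' : Fin k} (h : i ≠ i') : cyc s p i ≠ cyc s p i' :=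
  fun hh => h (p.1.1.injective (Subtype.ext hh))

lemma disj (p : Fib s.1 k) {i i' : Fin k} (h : i ≠ i') :
    (cyc s p i).Disjoint (cyc s p i') :=
  s.1.cycleFactorsFinset_pairwise_disjoint (Finset.mem_coe.mpr (cyc_mem s p i))
    (Finset.mem_coe.mpr (cyc_mem s p i')) (cyc_ne s p h)

/-- cycle lengths. -/
def cb (p : Fib s.1 k) (i : Fin k) : ℕ := (cyc s p i).support.card

lemma two_le_cb (p : Fib s.1 k) (i : Fin k) : 2 ≤ cb s p i :=
  (isCycle_cyc s p i).two_le_card_support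

/-- the enumeration function. -/
def Ffun (p : Fib s.1 k) : (Σ i : Fin k, Fin (cb s p i)) → Fin n :=
  fun q => ((cyc s p q.1) ^ (q.2 : ℕ)) (p.1.2 q.1)

lemma cycleOf_x (p : Fib s.1 k) (i : Fin k) :
    (cyc s p i).cycleOf (p.1.2 i) = cyc s p i :=
  (isCycle_cyc s p i).cycleOf_eq (Equiv.Perm.mem_support.mp (x_mem s p i))

lemma length_toList_x (p : Fib s.1 k) (i : Fin k) :
    ((cyc s p i).toList (p.1.2 i)).length = cb s p i := by
  rw [Equiv.Perm.length_toList, cycleOf_x]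
  rfl

lemma Ffun_eq_get (p : Fib s.1 k) (i : Fin k) (j : Fin (cb s p i)) :
    Ffun s p ⟨i, j⟩ =
      ((cyc s p i).toList (p.1.2 i)).get ⟨j, by rw [length_toList_x]; exact j.2⟩ :=
  (Equiv.Perm.getElem_toList _ _ _ _).symm

lemma Ffun_mem_support (p : Fib s.1 k) (i : Fin k) (j : Fin (cb s p i)) :
    Ffun s p ⟨i, j⟩ ∈ (cyc s p i).support :=
  Equiv.Perm.pow_apply_mem_support.mpr (x_mem s p i)

lemma Ffun_inj (p : Fib s.1 k) : Function.Injective (Ffun s p) := by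
  rintro ⟨i, j⟩ ⟨i', j'⟩ h
  rcases eq_or_ne i i' with rfl | hne
  · rw [Ffun_eq_get, Ffun_eq_get] at h
    have hval := ((cyc s p i).nodup_toList _).get_inj_iff.mp h
    have hjj : (j : ℕ) = (j' : ℕ) := by simpa [Fin.ext_iff] using hval
    simp [Fin.ext_iff, hjj]
  · exfalso
    have h1 := Ffun_mem_support s p i j
    have h2 := Ffun_mem_support s p i' j'
    rw [h] at h1
    exact Finset.disjoint_left.mp ((disj s p hne).disjoint_support) h1 h2

lemma sum_cb (p : Fib s.1 k) : ∑ i, cb s p i = n := by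
  have h1 : ∑ i, cb s p i =
      ∑ g : {g // g ∈ s.1.cycleFactorsFinset}, (↑g : Equiv.Perm (Fin n)).support.card :=
    Equiv.sum_comp p.1.1 fun g => (↑g : Equiv.Perm (Fin n)).support.card
  rw [h1, show ∑ g : {g // g ∈ s.1.cycleFactorsFinset}, (↑g : Equiv.Perm (Fin n)).support.card
      = ∑ g ∈ s.1.cycleFactorsFinset, g.support.card from Finset.sum_coe_sort ((s.1 : Equiv.Perm (Fin n)).cycleFactorsFinset) (fun g => g.support.card)]
  have h2 : ∑ g ∈ s.1.cycleFactorsFinset, g.support.card = s.1.cycleType.sum := by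
    rw [Equiv.Perm.cycleType_def]
    rfl
  rw [h2, Equiv.Perm.sum_cycleType, support_eq_univ s, Finset.card_univ, Fintype.card_fin]

lemma cb_mem (p : Fib s.1 k) : cb s p ∈ comps2 n k :=
  mem_comps2.mpr ⟨fun i => ⟨two_le_cb s p i,
    le_trans (Finset.card_le_univ _) (by simp)⟩, sum_cb s p⟩

lemma Ffun_bij (p : Fib s.1 k) : Function.Bijective (Ffun s p) := by
  refine (Fintype.bijective_iff_injective_and_card _).mpr ⟨Ffun_inj s p, ?_⟩
  simp [Fintype.card_sigma, sum_cb s p]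

/-- the map from cycle data to the total space. -/
noncomputable def Theta (p : Fib s.1 k) : Tt n k :=
  ⟨⟨cb s p, cb_mem s p⟩, Equiv.ofBijective _ (Ffun_bij s p)⟩

lemma Lo_Theta (p : Fib s.1 k) (i : Fin k) :
    Lo (cb s p) (Theta s p).2 i = (cyc s p i).toList (p.1.2 i) := by
  apply List.ext_get
  · exact (length_Lo (cb s p) (Theta s p).2 i).trans (length_toList_x s p i).symm
  intro m h1 h2
  have h1' := h1
  replace h1 : m < cb s p i := by have := length_Lo (cb s p) (Theta s p).2 i; omega
  have : (Lo (cb s p) (Theta s p).2 i).get ⟨m, h1'⟩ =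
      Ffun s p ⟨i, ⟨m, h1⟩⟩ := by
    simp [Lo, List.get_ofFn, Theta, cb]
    rfl
  rw [this, Ffun_eq_get]

lemma formPerm_Lo_Theta (p : Fib s.1 k) (i : Fin k) :
    (Lo (cb s p) (Theta s p).2 i).formPerm = cyc s p i := by
  rw [Lo_Theta, Equiv.Perm.formPerm_toList, cycleOf_x]

lemma PsiD_Theta (p : Fib s.1 k) : PsiD (Theta s p) = s := by
  apply Subtype.ext
  show Psi (cb s p) (Theta s p).2 = s.1
  show (List.ofFn fun i => (Lo (cb s p) (Theta s p).2 i).formPerm).prod = s.1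
  have hl : (List.ofFn fun i => (Lo (cb s p) (Theta s p).2 i).formPerm) =
      List.ofFn fun i => cyc s p i := by
    congr 1
    funext i
    exact formPerm_Lo_Theta s p i
  rw [hl]
  have hnd : (List.ofFn fun i => cyc s p i).Nodup :=
    List.nodup_ofFn.mpr fun i i' h => p.1.1.injective (Subtype.ext h)
  have htf : s.1.cycleFactorsFinset = (List.ofFn fun i => cyc s p i).toFinset := by
    ext g
    simp only [List.mem_toFinset, List.mem_ofFn, Set.mem_range]
    constructor
    · intro hg
      exact ⟨p.1.1.symm ⟨g, hg⟩, by simp [cyc]⟩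
    · rintro ⟨i, rfl⟩
      exact cyc_mem s p i
  exact ((Equiv.Perm.cycleFactorsFinset_eq_list_toFinset hnd).mp htf).2.2

/-- the map into the fiber. -/
noncomputable def Theta' (p : Fib s.1 k) : {t : Tt n k // PsiD t = s} :=
  ⟨Theta s p, PsiD_Theta s p⟩

lemma Theta'_inj : Function.Injective (Theta' s) := by
  intro p p' h
  have hT : Theta s p = Theta s p' := congrArg Subtype.val h
  have hcb : cb s p = cb s p' := congrArg (fun t : Tt n k => t.1.1) hT
  have hT' : (⟨⟨cb s p, cb_mem s p⟩, Equiv.ofBijective _ (Ffun_bij s p)⟩ : Tt n k)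
      = ⟨⟨cb s p', cb_mem s p'⟩, Equiv.ofBijective _ (Ffun_bij s p')⟩ := hT
  have hF : ∀ (i : Fin k) (j : ℕ) (hj : j < cb s p i) (hj' : j < cb s p' i),
      Ffun s p ⟨i, ⟨j, hj⟩⟩ = Ffun s p' ⟨i, ⟨j, hj'⟩⟩ := fun i j hj hj' =>
    Tt_inj2 hT' i j hj hj'
  have hx : p.1.2 = p'.1.2 := by
    funext i
    have h0 : (0 : ℕ) < cb s p i := lt_of_lt_of_le two_pos (two_le_cb s p i)
    have h0' : (0 : ℕ) < cb s p' i := hcb ▸ h0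
    have := hF i 0 h0 h0'
    simpa [Ffun] using this
  have hb : p.1.1 = p'.1.1 := by
    apply Equiv.ext
    intro i
    apply Subtype.ext
    have e1 : cyc s p i = s.1.cycleOf (p.1.2 i) :=
      Equiv.Perm.cycle_is_cycleOf (x_mem s p i) (cyc_mem s p i)
    have e2 : cyc s p' i = s.1.cycleOf (p'.1.2 i) :=
      Equiv.Perm.cycle_is_cycleOf (x_mem s p' i) (cyc_mem s p' i)
    show cyc s p i = cyc s p' i
    rw [e1, e2, hx]
  apply Subtype.ext
  exact Prod.ext hb hx

lemma Theta'_surj : Function.Surjective (Theta' s) := by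
  rintro ⟨⟨⟨c, hc⟩, f⟩, ht⟩
  have hψ : Psi c f = s.1 := congrArg Subtype.val ht
  have hc2 : ∀ i, 2 ≤ c i := hc_of_mem hc
  have bsub : ∀ i, (Lo c f i).formPerm ∈ s.1.cycleFactorsFinset := fun i =>
    hψ ▸ formPerm_Lo_mem_cycleFactors hc2 i
  have binj : Function.Injective
      (fun i => (⟨(Lo c f i).formPerm, bsub i⟩ : {g // g ∈ s.1.cycleFactorsFinset})) := by
    intro i i' h
    by_contra hne
    have hd := disjoint_Lo f (hc2 i) (hc2 i') hne
    have hcoe : (Lo c f i).formPerm = (Lo c f i').formPerm := congrArg Subtype.val h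
    rw [hcoe, Equiv.Perm.disjoint_iff_disjoint_support, disjoint_self] at hd
    have h2 := (isCycle_Lo f (hc2 i')).two_le_card_support
    rw [hd] at h2
    simp at h2
  have bbij : Function.Bijective
      (fun i => (⟨(Lo c f i).formPerm, bsub i⟩ : {g // g ∈ s.1.cycleFactorsFinset})) :=
    (Fintype.bijective_iff_injective_and_card _).mpr ⟨binj, by
      rw [Fintype.card_coe, card_factors s, Fintype.card_fin]⟩
  have hbx : ∀ i, (fun i => f ⟨i, ⟨0, lt_of_lt_of_le two_pos (hc2 i)⟩⟩) i ∈
      (↑(Equiv.ofBijective _ bbij i) : Equiv.Perm (Fin n)).support := by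
    intro i
    show f ⟨i, ⟨0, _⟩⟩ ∈ (Lo c f i).formPerm.support
    rw [support_Lo f (hc2 i), List.mem_toFinset, mem_Lo]
    exact ⟨_, rfl⟩
  refine ⟨⟨(Equiv.ofBijective _ bbij, fun i => f ⟨i, ⟨0, lt_of_lt_of_le two_pos (hc2 i)⟩⟩), hbx⟩, ?_⟩
  apply Subtype.ext
  show Theta s _ = (⟨⟨c, hc⟩, f⟩ : Tt n k)
  apply Tt_ext
  · apply Subtype.ext
    funext i
    show (Lo c f i).formPerm.support.card = c i
    rw [support_Lo f (hc2 i), List.toFinset_card_of_nodup (nodup_Lo c f i), length_Lo]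
  · intro i j hj hj'
    have hjc : j < c i := hj'
    show ((Lo c f i).formPerm ^ j) (f ⟨i, ⟨0, lt_of_lt_of_le two_pos (hc2 i)⟩⟩) = f ⟨i, ⟨j, hj'⟩⟩
    have hlen : (Lo c f i).length = c i := length_Lo c f i
    have h0lt : 0 < (Lo c f i).length := by omega
    have hpow := List.formPerm_pow_apply_getElem (Lo c f i) (nodup_Lo c f i) j 0 h0lt
    have hx0 : (Lo c f i)[(0 : ℕ)]'h0lt = f ⟨i, ⟨0, lt_of_lt_of_le two_pos (hc2 i)⟩⟩ := by
      simp [Lo]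
    have hmod : (0 + j) % (Lo c f i).length = j := by
      rw [hlen, Nat.zero_add, Nat.mod_eq_of_lt hjc]
    rw [hx0] at hpow
    rw [hpow]
    have hjl : j < (Lo c f i).length := by omega
    simp only [hmod]
    simp [Lo]

lemma card_fiber : Fintype.card {t : Tt n k // PsiD t = s} =
    k.factorial * s.1.cycleType.prod := by
  rw [← Fintype.card_of_bijective (⟨Theta'_inj s, Theta'_surj s⟩ :
    Function.Bijective (Theta' s))]
  rw [Fintype.card_congr (Equiv.subtypeProdEquivSigmaSubtype
    (fun (b : Fin k ≃ {g // g ∈ s.1.cycleFactorsFinset}) (x : Fin k → Fin n) =>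
      ∀ i, x i ∈ (↑(b i) : Equiv.Perm (Fin n)).support))]
  rw [Fintype.card_sigma]
  have hone : ∀ b : Fin k ≃ {g // g ∈ s.1.cycleFactorsFinset},
      Fintype.card {x : Fin k → Fin n // ∀ i, x i ∈ (↑(b i) : Equiv.Perm (Fin n)).support}
        = s.1.cycleType.prod := by
    intro b
    rw [Fintype.card_congr Equiv.subtypePiEquivPi, Fintype.card_pi]
    have : ∀ i : Fin k,
        Fintype.card {y // y ∈ (↑(b i) : Equiv.Perm (Fin n)).support} =
          (↑(b i) : Equiv.Perm (Fin n)).support.card := fun i => Fintype.card_coe _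
    rw [Finset.prod_congr rfl fun i _ => this i]
    rw [Equiv.prod_comp b fun g => (↑g : Equiv.Perm (Fin n)).support.card]
    rw [show ∏ g : {g // g ∈ s.1.cycleFactorsFinset}, (↑g : Equiv.Perm (Fin n)).support.card
      = ∏ g ∈ s.1.cycleFactorsFinset, g.support.card from Finset.prod_coe_sort ((s.1 : Equiv.Perm (Fin n)).cycleFactorsFinset) (fun g => g.support.card)]
    rw [Equiv.Perm.cycleType_def]
    rfl
  simp_rw [hone]
  rw [Finset.sum_const, Finset.card_univ]
  have hek : Fintype.card {g // g ∈ s.1.cycleFactorsFinset} = k := by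
    rw [Fintype.card_coe, card_factors s]
  rw [Fintype.card_equiv ((Fintype.equivFinOfCardEq hek).symm)]
  simp [Fintype.card_fin, smul_eq_mul]

end Fiber


section Sums

lemma S_eq_left (n k : ℕ) :
    (∑ t : Tt n k, ∏ i, ((t.1.1 i : ℚ))⁻¹)
      = ∑ c ∈ comps2 n k, (n.factorial : ℚ) * ∏ i, ((c i : ℚ))⁻¹ := by
  rw [← Finset.univ_sigma_univ, Finset.sum_sigma]
  refine (Finset.sum_congr rfl fun cc _ => ?_).trans
    (Finset.sum_coe_sort (comps2 n k) fun c => (n.factorial : ℚ) * ∏ i, ((c i : ℚ))⁻¹)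
  have hc : Fintype.card (Σ i : Fin k, Fin (cc.1 i)) = n := by
    simp [Fintype.card_sigma, (mem_comps2.mp cc.2).2]
  have hcard : Fintype.card ((Σ i : Fin k, Fin (cc.1 i)) ≃ Fin n) = n.factorial := by
    rw [Fintype.card_equiv (Fintype.equivFinOfCardEq hc), hc]
  show (∑ _f : ((Σ i : Fin k, Fin (cc.1 i)) ≃ Fin n), ∏ i, ((cc.1 i : ℚ))⁻¹)
      = (n.factorial : ℚ) * ∏ i, ((cc.1 i : ℚ))⁻¹
  rw [Finset.sum_const, Finset.card_univ, hcard, nsmul_eq_mul]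

lemma S_eq_right (n k : ℕ) :
    (∑ t : Tt n k, ∏ i, ((t.1.1 i : ℚ))⁻¹)
      = (Fintype.card (Dt n k) : ℚ) * (k.factorial : ℚ) := by
  rw [← Fintype.sum_fiberwise (PsiD (n := n) (k := k))
    (fun t => ∏ i, ((t.1.1 i : ℚ))⁻¹)]
  have hinner : ∀ s : Dt n k,
      (∑ t : {t : Tt n k // PsiD t = s}, ∏ i, (((t.1).1.1 i : ℚ))⁻¹)
        = (k.factorial : ℚ) := by
    intro s
    have hprodpos : s.1.cycleType.prod ≠ 0 := by
      intro h0
      rw [Multiset.prod_eq_zero_iff] at h0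
      have := Equiv.Perm.two_le_of_mem_cycleType h0
      omega
    have hw : ∀ t : {t : Tt n k // PsiD t = s},
        (∏ i, (((t.1).1.1 i : ℚ))⁻¹) = ((s.1.cycleType.prod : ℕ) : ℚ)⁻¹ := by
      intro t
      have hprod : s.1.cycleType.prod = ∏ i, (t.1).1.1 i := by
        have hct : s.1.cycleType = ↑(List.ofFn (t.1).1.1) := by
          rw [← congrArg Subtype.val t.2]
          exact cycleType_Psi (hc_of_mem (t.1).1.2)
        rw [hct, Multiset.prod_coe, List.prod_ofFn]
      rw [hprod]
      push_cast
      rw [Finset.prod_inv_distrib]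
    rw [Finset.sum_congr rfl fun t _ => hw t, Finset.sum_const, Finset.card_univ,
      card_fiber s, nsmul_eq_mul, Nat.cast_mul]
    exact mul_inv_cancel_right₀ (Nat.cast_ne_zero.mpr hprodpos) _
  rw [Finset.sum_congr rfl fun s _ => hinner s, Finset.sum_const, Finset.card_univ,
    nsmul_eq_mul]

lemma mem_comps {m k : ℕ} {j : Fin k → ℕ} :
    j ∈ comps m k ↔ (∀ i, 1 ≤ j i ∧ j i ≤ m) ∧ ∑ i, j i = m := by
  simp [comps, Fintype.mem_piFinset, Finset.mem_Icc, forall_and]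

lemma hbound {n k : ℕ} {c : Fin k → ℕ} (hc : c ∈ comps2 n k) (i : Fin k) :
    c i + 2 * (k - 1) ≤ n := by
  obtain ⟨h1, h2⟩ := mem_comps2.mp hc
  have herase : (Finset.univ.erase i).card • 2 ≤ ∑ i' ∈ Finset.univ.erase i, c i' :=
    Finset.card_nsmul_le_sum _ _ _ fun x _ => (h1 x).1
  have hsum : ∑ i' ∈ Finset.univ.erase i, c i' + c i = ∑ i', c i' :=
    Finset.sum_erase_add _ _ (Finset.mem_univ i)
  have hcard : (Finset.univ.erase i).card = k - 1 := by
    rw [Finset.card_erase_of_mem (Finset.mem_univ i), Finset.card_univ, Fintype.card_fin]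
  rw [hcard] at herase
  rw [h2] at hsum
  simp only [smul_eq_mul] at herase
  omega

lemma Hsum_eq {n k : ℕ} (hkn : k ≤ n) :
    Hsum (n - k) k = ∑ c ∈ comps2 n k, ∏ i, ((c i : ℚ))⁻¹ := by
  rw [Hsum]
  refine Finset.sum_nbij' (fun j => fun i => j i + 1) (fun c => fun i => c i - 1)
    ?_ ?_ ?_ ?_ ?_
  · intro j hj
    obtain ⟨h1, h2⟩ := mem_comps.mp hj
    refine mem_comps2.mpr ⟨fun i => ?_, ?_⟩
    · show 2 ≤ j i + 1 ∧ j i + 1 ≤ n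
      have := h1 i
      have hk1 : 0 < k := Fin.pos i
      omega
    · show (∑ i, (j i + 1)) = n
      rw [Finset.sum_add_distrib, h2]
      simp only [Finset.sum_const, Finset.card_univ, Fintype.card_fin, smul_eq_mul, mul_one]
      omega
  · intro c hcm
    obtain ⟨h1, h2⟩ := mem_comps2.mp hcm
    refine mem_comps.mpr ⟨fun i => ?_, ?_⟩
    · show 1 ≤ c i - 1 ∧ c i - 1 ≤ n - k
      have := h1 i
      have hbd := hbound hcm i
      have hk1 : 0 < k := Fin.pos i
      omega
    · show (∑ i, (c i - 1)) = n - k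
      have hsub : ∑ i : Fin k, (c i - 1) + ∑ i : Fin k, (1 : ℕ) = ∑ i : Fin k, c i := by
        rw [← Finset.sum_add_distrib]
        exact Finset.sum_congr rfl fun i _ => by have := (h1 i).1; omega
      simp only [Finset.sum_const, Finset.card_univ, Fintype.card_fin, smul_eq_mul,
        mul_one] at hsub
      omega
  · intro j _
    funext i
    show (j i + 1) - 1 = j i
    simp
  · intro c hcm
    funext i
    show (c i - 1) + 1 = c i
    have := ((mem_comps2.mp hcm).1 i).1
    omega
  · intro j _
    refine Finset.prod_congr rfl fun i _ => ?_
    show ((j i : ℚ) + 1)⁻¹ = ((j i + 1 : ℕ) : ℚ)⁻¹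
    push_cast
    ring

end Sums

end Stmt3Aux

theorem stmt3 (n k : ℕ) :
    Hsum' ((n : ℤ) - k) k = ((k.factorial : ℚ) / n.factorial) * dStir n k := by
  classical
  by_cases hkn : k ≤ n
  · have htn : ((n : ℤ) - k).toNat = n - k := by omega
    rw [Hsum', if_pos (by omega : (0 : ℤ) ≤ (n : ℤ) - k), htn]
    have hmain : (n.factorial : ℚ) * Hsum (n - k) k
        = (k.factorial : ℚ) * (dStir n k : ℚ) := by
      calc (n.factorial : ℚ) * Hsum (n - k) k
          = ∑ c ∈ Stmt3Aux.comps2 n k, (n.factorial : ℚ) * ∏ i, ((c i : ℚ))⁻¹ := by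
            rw [Stmt3Aux.Hsum_eq hkn, Finset.mul_sum]
        _ = ∑ t : Stmt3Aux.Tt n k, ∏ i, ((t.1.1 i : ℚ))⁻¹ :=
            (Stmt3Aux.S_eq_left n k).symm
        _ = (Fintype.card (Stmt3Aux.Dt n k) : ℚ) * (k.factorial : ℚ) :=
            Stmt3Aux.S_eq_right n k
        _ = (k.factorial : ℚ) * (dStir n k : ℚ) := by
            rw [dStir, Nat.card_eq_fintype_card]; ring
    have hn0 : (n.factorial : ℚ) ≠ 0 := Nat.cast_ne_zero.mpr n.factorial_ne_zero
    rw [div_mul_eq_mul_div, eq_div_iff hn0]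
    linear_combination hmain
  · push_neg at hkn
    rw [Hsum', if_neg (by omega)]
    have hempty : IsEmpty
        {σ : Equiv.Perm (Fin n) // (∀ i, σ i ≠ i) ∧ Multiset.card σ.cycleType = k} := by
      constructor
      rintro ⟨σ, h1, h2⟩
      have hsum := Equiv.Perm.sum_cycleType σ
      have hle : Multiset.card σ.cycleType • 1 ≤ σ.cycleType.sum :=
        Multiset.card_nsmul_le_sum fun x hx => by
          have := Equiv.Perm.two_le_of_mem_cycleType hx; omega
      have hsupp : σ.support.card ≤ n :=
        le_trans (Finset.card_le_univ _) (by simp)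
      simp only [smul_eq_mul, mul_one] at hle
      omega
    rw [dStir, Nat.card_of_isEmpty]
    simp
end

section
/- The number of fixed-point-free permutations of a set of size 2k+1 with exactly k cycles equals (2/3)·k·(2k+1)!!. -/
open Equiv Equiv.Perm


open Multiset in
lemma multiset_classify (k : ℕ) (m : Multiset ℕ) (h2 : ∀ x ∈ m, 2 ≤ x)
    (hc : Multiset.card m = k + 1) (hs : m.sum = 2 * (k + 1) + 1) :
    m = 3 ::ₘ Multiset.replicate k 2 := by
  have h23 : ∀ x ∈ m, x = 2 ∨ x = 3 := by
    intro x hx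
    by_contra hcon
    push_neg at hcon
    have h4 : 4 ≤ x := by have := h2 x hx; omega
    obtain ⟨m', rfl⟩ := exists_cons_of_mem hx
    have hle : Multiset.card m' • 2 ≤ m'.sum :=
      card_nsmul_le_sum (fun y hy => h2 y (mem_cons_of_mem hy))
    simp only [sum_cons, card_cons] at hs hc
    rw [smul_eq_mul] at hle
    omega
  -- counts
  have hcount3 : m.count 3 = 1 := by
    have hsplit : Multiset.card (m.filter (· = 2)) + Multiset.card (m.filter (¬ · = 2)) =
        Multiset.card m := by
      rw [← card_add, filter_add_not]
    have hf3 : m.filter (¬ · = 2) = m.filter (· = 3) := by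
      apply filter_congr
      intro x hx
      rcases h23 x hx with h | h <;> simp [h]
    have e2 : m.filter (· = 2) = replicate (Multiset.card (m.filter (· = 2))) 2 :=
      eq_replicate_card.mpr (fun x hx => (Multiset.mem_filter.mp hx).2)
    have e3 : m.filter (· = 3) = replicate (Multiset.card (m.filter (· = 3))) 3 :=
      eq_replicate_card.mpr (fun x hx => (Multiset.mem_filter.mp hx).2)
    have hsum2 : (m.filter (· = 2)).sum = 2 * Multiset.card (m.filter (· = 2)) := by
      rw [e2]; simp [mul_comm]
    have hsum3 : (m.filter (¬ · = 2)).sum = 3 * Multiset.card (m.filter (¬ · = 2)) := by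
      rw [hf3, e3]; simp [mul_comm]
    have hsumsplit : (m.filter (· = 2)).sum + (m.filter (¬ · = 2)).sum = m.sum := by
      rw [← sum_add, filter_add_not]
    have hcnt : m.count 3 = Multiset.card (m.filter (· = 3)) := by
      rw [count_eq_card_filter_eq]; congr 1; apply filter_congr; intro x _; exact eq_comm
    rw [hcnt, ← hf3]
    omega
  have hcount2 : m.count 2 = k := by
    have hsplit : Multiset.card (m.filter (· = 2)) + Multiset.card (m.filter (¬ · = 2)) =
        Multiset.card m := by
      rw [← card_add, filter_add_not]
    have hf3 : m.filter (¬ · = 2) = m.filter (· = 3) := by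
      apply filter_congr
      intro x hx
      rcases h23 x hx with h | h <;> simp [h]
    have hcnt3 : m.count 3 = Multiset.card (m.filter (· = 3)) := by
      rw [count_eq_card_filter_eq]; congr 1; apply filter_congr; intro x _; exact eq_comm
    have hcnt2 : m.count 2 = Multiset.card (m.filter (· = 2)) := by
      rw [count_eq_card_filter_eq]; congr 1; apply filter_congr; intro x _; exact eq_comm
    rw [hf3, ← hcnt3] at hsplit
    omega
  ext a
  by_cases ha2 : a = 2
  · subst ha2; simp [hcount2, count_replicate]
  by_cases ha3 : a = 3
  · subst ha3; simp [hcount3, count_replicate]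
  · have : a ∉ m := fun hmem => by rcases h23 a hmem with h | h <;> simp_all
    rw [count_eq_zero_of_notMem this]
    simp [count_cons, count_replicate, ha2, ha3, Ne.symm]




section Sigma0
variable (j : ℕ)

abbrev Btype (j : ℕ) := Fin j × Fin 2
abbrev Atype (j : ℕ) := Fin 3 ⊕ Btype j

def cper : Perm (Fin 3) := finRotate 3
def sper (j : ℕ) : Perm (Btype j) := Equiv.prodCongr (Equiv.refl (Fin j)) (Equiv.swap 0 1)
def uper (j : ℕ) : Perm (Atype j) := Equiv.sumCongr cper 1
def vper (j : ℕ) : Perm (Atype j) := Equiv.sumCongr 1 (sper j)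
def sig0 (j : ℕ) : Perm (Atype j) := Equiv.sumCongr cper (sper j)

lemma uv_mul : uper j * vper j = sig0 j := by
  ext x
  cases x <;> simp [uper, vper, sig0, sper]

lemma cper_ne (a : Fin 3) : cper a ≠ a := by revert a; decide

lemma sw_ne (l : Fin 2) : Equiv.swap (0:Fin 2) 1 l ≠ l := by revert l; decide

lemma sig0_ne (x : Atype j) : sig0 j x ≠ x := by
  cases x with
  | inl a => simpa [sig0] using cper_ne a
  | inr b =>
    simp [sig0, sper, Prod.ext_iff]
    exact sw_ne b.2

lemma uv_disjoint : Equiv.Perm.Disjoint (uper j) (vper j) := by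
  intro x
  cases x <;> simp [uper, vper]

lemma uper_isCycle : (uper j).IsCycle := by
  refine ⟨Sum.inl 0, by simp [uper]; exact cper_ne 0, ?_⟩
  rintro y hy
  cases y with
  | inr b => simp [uper] at hy
  | inl a =>
    have key : ∀ a : Fin 3, (cper ^ (a : ℕ)) 0 = a := by decide
    exact ⟨(a : ℕ), by
      have hp : ∀ (n : ℕ) (x : Fin 3), (uper j ^ n) (Sum.inl x) = Sum.inl ((cper ^ n) x) := by
        intro n
        induction n with
        | zero => simp
        | succ n ih => intro x; rw [pow_succ', pow_succ', Equiv.Perm.mul_apply, Equiv.Perm.mul_apply, ih x]; simp [uper]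
      rw [zpow_natCast, hp, key]⟩

lemma uper_support : (uper j).support = Finset.univ.map ⟨Sum.inl, Sum.inl_injective⟩ := by
  ext x
  cases x with
  | inl a => simp [Equiv.Perm.mem_support, uper, cper_ne a]
  | inr b => simp [Equiv.Perm.mem_support, uper]

lemma vper_support : (vper j).support = Finset.univ.map ⟨Sum.inr, Sum.inr_injective⟩ := by
  ext x
  cases x with
  | inl a => simp [Equiv.Perm.mem_support, vper]
  | inr b => simp [Equiv.Perm.mem_support, vper, sper, Prod.ext_iff]; exact sw_ne b.2

lemma uper_cycleType : (uper j).cycleType = {3} := by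
  rw [(uper_isCycle j).cycleType, uper_support]
  simp

lemma vper_sq : vper j ^ 2 = 1 := by
  ext x
  cases x with
  | inl a => simp [vper, pow_succ]
  | inr b =>
    simp [vper, pow_succ, sper, Prod.ext_iff]

lemma vper_cycleType_card : Multiset.card (vper j).cycleType = j ∧ ∀ x ∈ (vper j).cycleType, x = 2 := by
  have hdvd : ∀ x ∈ (vper j).cycleType, x = 2 := by
    intro x hx
    have h2 : 2 ≤ x := two_le_of_mem_cycleType hx
    have hd : x ∣ orderOf (vper j) := by
      rw [← Equiv.Perm.lcm_cycleType]
      exact Multiset.dvd_lcm hx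
    have ho : orderOf (vper j) ∣ 2 := orderOf_dvd_of_pow_eq_one (vper_sq j)
    have hx2 := hd.trans ho
    have := Nat.le_of_dvd (by norm_num) hx2
    omega
  constructor
  · have hsum : (vper j).cycleType.sum = 2 * j := by
      rw [Equiv.Perm.sum_cycleType, vper_support]
      simp [Btype, mul_comm]
    have hrep := Multiset.eq_replicate_card.mpr hdvd
    rw [hrep, Multiset.sum_replicate, smul_eq_mul] at hsum
    omega
  · exact hdvd

lemma sig0_cycleType : (sig0 j).cycleType = 3 ::ₘ Multiset.replicate j 2 := by
  rw [← uv_mul, Equiv.Perm.Disjoint.cycleType_mul (uv_disjoint j), uper_cycleType]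
  have h := vper_cycleType_card j
  have : (vper j).cycleType = Multiset.replicate j 2 := by
    have := Multiset.eq_replicate_card.mpr h.2
    rw [this, h.1]
  rw [this]
  rfl

end Sigma0




instance : DecidablePred (fun τ : Perm (Fin 3) => Commute τ cper) := fun τ => by
  unfold Commute SemiconjBy
  infer_instance

lemma card_comm_cper : Nat.card {τ : Perm (Fin 3) // Commute τ cper} = 3 := by
  rw [Nat.card_eq_fintype_card]
  decide




def pi2 : Fin 2 → Perm (Fin 2) := fun t => if t = 0 then 1 else Equiv.swap 0 1

lemma pi2_comm : ∀ t l : Fin 2, pi2 t (Equiv.swap 0 1 l) = Equiv.swap 0 1 (pi2 t l) := by decide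
lemma pi2_zero : ∀ t : Fin 2, pi2 t 0 = t := by decide
lemma pi2_one : ∀ t : Fin 2, pi2 t 1 = Equiv.swap 0 1 t := by decide
lemma sw01 : Equiv.swap (0 : Fin 2) 1 0 = 1 := by decide
lemma sw_of_ne : ∀ t t' : Fin 2, t ≠ t' → t' = Equiv.swap 0 1 t := by decide

def Phi (j : ℕ) (p : Perm (Fin j) × (Fin j → Fin 2)) : Perm (Btype j) :=
  Equiv.prodShear p.1 (fun i => pi2 (p.2 i))

lemma Phi_commute (j : ℕ) (p : Perm (Fin j) × (Fin j → Fin 2)) :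
    Commute (Phi j p) (sper j) := by
  apply Equiv.ext
  rintro ⟨i, l⟩
  simp [Phi, sper, Equiv.prodShear, Equiv.Perm.mul_apply, pi2_comm]

lemma card_comm_sper (j : ℕ) :
    Nat.card {τ : Perm (Btype j) // Commute τ (sper j)}
      = Nat.factorial j * 2 ^ j := by
  have hbij : Function.Bijective
      (fun p : Perm (Fin j) × (Fin j → Fin 2) =>
        (⟨Phi j p, Phi_commute j p⟩ : {τ : Perm (Btype j) // Commute τ (sper j)})) := by
    constructor
    · rintro ⟨g, ε⟩ ⟨g', ε'⟩ h
      simp only [Subtype.mk.injEq] at h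
      have happ : ∀ i : Fin j, Phi j (g, ε) (i, 0) = Phi j (g', ε') (i, 0) := by
        intro i; rw [h]
      have hg : ∀ i : Fin j, g i = g' i ∧ ε i = ε' i := by
        intro i
        have := happ i
        simp [Phi, Equiv.prodShear, pi2_zero, Prod.ext_iff] at this
        exact this
      have : g = g' := Equiv.ext fun i => (hg i).1
      have hε : ε = ε' := funext fun i => (hg i).2
      simp [this, hε]
    · rintro ⟨τ, hτ⟩
      have hcomm : ∀ x, τ (sper j x) = sper j (τ x) := by
        intro x
        have := congrArg (fun σ => σ x) hτ.eq
        simpa [Equiv.Perm.mul_apply] using this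
      set gfun : Fin j → Fin j := fun i => (τ (i, 0)).1 with hgfun
      set ε : Fin j → Fin 2 := fun i => (τ (i, 0)).2 with hε
      have hτ0 : ∀ i, τ (i, 0) = (gfun i, ε i) := fun i => rfl
      have hτ1 : ∀ i, τ (i, 1) = (gfun i, Equiv.swap 0 1 (ε i)) := by
        intro i
        have h1 : ((i, 1) : Btype j) = sper j (i, 0) := by
          simp [sper, sw01]
        rw [h1, hcomm, hτ0]
        simp [sper]
      have hginj : Function.Injective gfun := by
        intro i i' hii
        by_cases hee : ε i = ε i'
        · have : τ (i, 0) = τ (i', 0) := by rw [hτ0, hτ0, hii, hee]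
          have := τ.injective this
          exact (Prod.ext_iff.mp this).1
        · have h2 : ε i' = Equiv.swap 0 1 (ε i) := sw_of_ne _ _ (Ne.symm (fun h => hee h.symm))
          have : τ (i', 0) = τ (i, 1) := by rw [hτ0, hτ1, hii, h2]
          have := τ.injective this
          have h02 := (Prod.ext_iff.mp this).2
          simp at h02
      have hgbij : Function.Bijective gfun := Finite.injective_iff_bijective.mp hginj
      refine ⟨(Equiv.ofBijective gfun hgbij, ε), ?_⟩
      apply Subtype.ext
      apply Equiv.ext
      rintro ⟨i, l⟩
      have : l = 0 ∨ l = 1 := by omega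
      rcases this with rfl | rfl
      · simp [Phi, Equiv.prodShear, pi2_zero, hτ0]
      · simp [Phi, Equiv.prodShear, pi2_one, hτ1]
  rw [← Nat.card_eq_of_bijective _ hbij]
  simp [Nat.card_eq_fintype_card, Fintype.card_perm, mul_comm]




lemma cper_sq_ne : ∀ a : Fin 3, cper (cper a) ≠ a := by decide

lemma sig0_sq_inl (j : ℕ) (a : Fin 3) :
    sig0 j (sig0 j (Sum.inl a)) = Sum.inl (cper (cper a)) := by simp [sig0]

lemma sig0_sq_inr (j : ℕ) (b : Btype j) :
    sig0 j (sig0 j (Sum.inr b)) = Sum.inr b := by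
  simp [sig0, sper, Prod.ext_iff]

lemma comm_maps_inl {j : ℕ} {τ : Perm (Atype j)} (h : Commute τ (sig0 j)) :
    Set.MapsTo τ (Set.range Sum.inl) (Set.range Sum.inl) := by
  rintro x ⟨a, rfl⟩
  have hc : ∀ y, τ (sig0 j y) = sig0 j (τ y) := by
    intro y
    have := congrArg (fun σ => σ y) h.eq
    simpa [Equiv.Perm.mul_apply] using this
  rcases hx : τ (Sum.inl a) with a' | b'
  · exact ⟨a', rfl⟩
  · exfalso
    have h1 : τ (sig0 j (sig0 j (Sum.inl a))) = sig0 j (sig0 j (τ (Sum.inl a))) := by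
      rw [hc, hc]
    rw [hx, sig0_sq_inr, ← hx] at h1
    have := τ.injective h1
    rw [sig0_sq_inl] at this
    exact cper_sq_ne a (Sum.inl_injective this)

lemma comm_decomp {j : ℕ} {τ : Perm (Atype j)} (h : Commute τ (sig0 j)) :
    ∃ p : Perm (Fin 3) × Perm (Btype j),
      Equiv.sumCongr p.1 p.2 = τ ∧ Commute p.1 cper ∧ Commute p.2 (sper j) := by
  obtain ⟨⟨τ₁, τ₂⟩, hp⟩ := mem_sumCongrHom_range_of_perm_mapsTo_inl (comm_maps_inl h)
  simp only [Equiv.Perm.sumCongrHom_apply] at hp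
  have hcomm := h
  rw [← hp, show sig0 j = Equiv.sumCongr cper (sper j) from rfl] at hcomm
  have h1 := hcomm.eq
  rw [Equiv.Perm.sumCongr_mul, Equiv.Perm.sumCongr_mul] at h1
  have h2 := Equiv.Perm.sumCongrHom_injective
    (show Equiv.Perm.sumCongrHom _ _ (τ₁ * cper, τ₂ * sper j)
      = Equiv.Perm.sumCongrHom _ _ (cper * τ₁, sper j * τ₂) from h1)
  simp only [Prod.mk.injEq] at h2
  exact ⟨(τ₁, τ₂), hp, h2.1, h2.2⟩

lemma card_comm_sig0 (j : ℕ) :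
    Nat.card {τ : Perm (Atype j) // Commute τ (sig0 j)}
      = Nat.card {τ₁ : Perm (Fin 3) // Commute τ₁ cper}
        * Nat.card {τ₂ : Perm (Btype j) // Commute τ₂ (sper j)} := by
  rw [← Nat.card_prod]
  apply Nat.card_congr
  apply Equiv.symm
  refine Equiv.ofBijective (fun p =>
    ⟨Equiv.sumCongr p.1.1 p.2.1, by
      have h1 : Commute (p.1.1 : Perm (Fin 3)) cper := p.1.2
      have h2 : Commute (p.2.1 : Perm (Btype j)) (sper j) := p.2.2
      show _ * _ = _ * _
      have hs : sig0 j = Equiv.sumCongr cper (sper j) := rfl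
      rw [hs, Equiv.Perm.sumCongr_mul, Equiv.Perm.sumCongr_mul, h1.eq, h2.eq]⟩) ⟨?_, ?_⟩
  · rintro ⟨⟨a1, ha1⟩, ⟨a2, ha2⟩⟩ ⟨⟨b1, hb1⟩, ⟨b2, hb2⟩⟩ hab
    simp only [Subtype.mk.injEq] at hab
    have := Equiv.Perm.sumCongrHom_injective (show Equiv.Perm.sumCongrHom _ _ (a1, a2)
      = Equiv.Perm.sumCongrHom _ _ (b1, b2) from hab)
    simp only [Prod.mk.injEq] at this
    simp [Prod.ext_iff, this.1, this.2]
  · rintro ⟨τ, hτ⟩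
    obtain ⟨⟨τ₁, τ₂⟩, hp, h1, h2⟩ := comm_decomp hτ
    exact ⟨⟨⟨τ₁, h1⟩, ⟨τ₂, h2⟩⟩, Subtype.ext hp⟩



open MulAction in
lemma conj_class_card {G : Type*} [Group G] [Fintype G] (σ0 : G) :
    Nat.card {σ : G // IsConj σ0 σ} * Nat.card {τ : G // Commute τ σ0} = Nat.card G := by
  classical
  letI : Fintype (ConjAct G) := ‹Fintype G›
  letI : Fintype (orbit (ConjAct G) σ0) := Set.Finite.fintype (Set.toFinite _)
  letI : Fintype (stabilizer (ConjAct G) σ0) :=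
    Set.Finite.fintype (Set.toFinite _)
  have hos := card_orbit_mul_card_stabilizer_eq_card_group (ConjAct G) σ0
  have h1 : Nat.card {σ : G // IsConj σ0 σ} = Fintype.card (orbit (ConjAct G) σ0) := by
    rw [Nat.card_eq_fintype_card]
    apply Fintype.card_congr
    apply Equiv.subtypeEquivRight
    intro σ
    rw [ConjAct.mem_orbit_conjAct, isConj_comm]
  have h2 : Nat.card {τ : G // Commute τ σ0} = Fintype.card (stabilizer (ConjAct G) σ0) := by
    rw [Nat.card_eq_fintype_card]
    apply Fintype.card_congr
    refine ⟨fun p => ⟨ConjAct.toConjAct p.1, ?_⟩, fun p => ⟨ConjAct.ofConjAct p.1, ?_⟩, ?_, ?_⟩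
    · rw [mem_stabilizer_iff, ConjAct.toConjAct_smul]
      have := p.2.eq
      rw [this]
      group
    · have hp := p.2
      rw [mem_stabilizer_iff, ConjAct.smul_def] at hp
      show ConjAct.ofConjAct p.1 * σ0 = σ0 * ConjAct.ofConjAct p.1
      calc ConjAct.ofConjAct p.1 * σ0
          = (ConjAct.ofConjAct p.1 * σ0 * (ConjAct.ofConjAct p.1)⁻¹) * ConjAct.ofConjAct p.1 := by
            group
        _ = σ0 * ConjAct.ofConjAct p.1 := by rw [hp]
    · intro p; rfl
    · intro p; rfl
  rw [h1, h2, hos, Nat.card_eq_fintype_card]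
  rfl




-- membership characterization
lemma mem_iff_isConj (j : ℕ) (σ : Perm (Atype j)) :
    ((∀ x, σ x ≠ x) ∧ Multiset.card σ.cycleType = j + 1) ↔ IsConj (sig0 j) σ := by
  have hcardA : Fintype.card (Atype j) = 2 * (j + 1) + 1 := by
    simp [Atype, Btype]; ring
  constructor
  · rintro ⟨hfix, hcard⟩
    rw [isConj_iff_cycleType_eq, sig0_cycleType]
    symm
    apply multiset_classify _ _ (fun x hx => Equiv.Perm.two_le_of_mem_cycleType hx) hcard
    rw [Equiv.Perm.sum_cycleType]
    have : σ.support = Finset.univ := by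
      ext x; simp [Equiv.Perm.mem_support, hfix x]
    rw [this, Finset.card_univ, hcardA]
  · intro hconj
    rw [isConj_iff_cycleType_eq, sig0_cycleType] at hconj
    constructor
    · intro x
      have hsum : σ.cycleType.sum = 2 * (j + 1) + 1 := by
        rw [← hconj]; simp [Multiset.sum_replicate]; ring
      rw [Equiv.Perm.sum_cycleType] at hsum
      have : σ.support = Finset.univ := by
        apply Finset.eq_univ_of_card
        rw [hsum, hcardA]
      have : x ∈ σ.support := this ▸ Finset.mem_univ x
      exact Equiv.Perm.mem_support.mp this
    · rw [← hconj]; simp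

-- transfer across equiv
lemma cycleType_permCongr {α β : Type*} [Fintype α] [DecidableEq α] [Fintype β] [DecidableEq β]
    (e : α ≃ β) (σ : Perm α) : (e.permCongr σ).cycleType = σ.cycleType := by
  classical
  have hall : ∀ x : β, (fun _ : β => True) x := fun _ => trivial
  let f : α ≃ {x : β // True} := e.trans (Equiv.subtypeUnivEquiv hall).symm
  have hext : σ.extendDomain f = e.permCongr σ := by
    ext x
    rw [Equiv.Perm.extendDomain_apply_subtype σ f (show True from trivial)]
    simp [f, Equiv.subtypeUnivEquiv]
  rw [← hext, Equiv.Perm.cycleType_extendDomain]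





lemma hcardA (j : ℕ) : Fintype.card (Atype j) = 2 * (j + 1) + 1 := by
  simp [Atype, Btype]; ring

lemma key_count (j : ℕ) :
    dStir (2 * (j + 1) + 1) (j + 1) * (3 * (Nat.factorial j * 2 ^ j))
      = Nat.factorial (2 * (j + 1) + 1) := by
  classical
  -- transfer to Atype
  let e : Atype j ≃ Fin (2 * (j + 1) + 1) := Fintype.equivFinOfCardEq (hcardA j)
  have htrans : dStir (2 * (j + 1) + 1) (j + 1)
      = Nat.card {σ : Perm (Atype j) //
          (∀ x, σ x ≠ x) ∧ Multiset.card σ.cycleType = j + 1} := by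
    rw [dStir]
    apply Nat.card_congr
    apply Equiv.symm
    refine Equiv.subtypeEquiv e.permCongr ?_
    intro σ
    constructor
    · rintro ⟨h1, h2⟩
      refine ⟨fun i => ?_, by rw [cycleType_permCongr]; exact h2⟩
      simp only [Equiv.permCongr_apply]
      intro hcon
      have := congrArg e.symm hcon
      simp at this
      exact h1 _ this
    · rintro ⟨h1, h2⟩
      constructor
      · intro x
        have := h1 (e x)
        simp only [Equiv.permCongr_apply] at this
        simp at this
        intro hcon
        exact this (by rw [hcon])
      · rw [cycleType_permCongr] at h2; exact h2
  have hmem : Nat.card {σ : Perm (Atype j) //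
      (∀ x, σ x ≠ x) ∧ Multiset.card σ.cycleType = j + 1}
      = Nat.card {σ : Perm (Atype j) // IsConj (sig0 j) σ} :=
    Nat.card_congr (Equiv.subtypeEquivRight (mem_iff_isConj j))
  have hG : Nat.card (Perm (Atype j)) = Nat.factorial (2 * (j + 1) + 1) := by
    rw [Nat.card_eq_fintype_card, Fintype.card_perm, hcardA]
  rw [htrans, hmem, ← hG, ← conj_class_card (sig0 j), card_comm_sig0, card_comm_cper,
    card_comm_sper]

theorem stmt5 (k : ℕ) :
    (dStir (2 * k + 1) k : ℚ)
      = 2 / 3 * k * Nat.doubleFactorial (2 * k + 1) := by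
  cases k with
  | zero =>
    have : dStir 1 0 = 0 := by
      rw [dStir]
      have : IsEmpty {σ : Equiv.Perm (Fin 1) // (∀ i, σ i ≠ i) ∧ Multiset.card σ.cycleType = 0} := by
        constructor
        rintro ⟨σ, hσ, -⟩
        exact hσ 0 (Subsingleton.elim _ _)
      exact Nat.card_of_isEmpty
    simp [this]
  | succ j =>
    have hkey := key_count j
    have hfac : Nat.factorial (2 * (j + 1) + 1)
        = Nat.doubleFactorial (2 * (j + 1) + 1) * (2 ^ (j + 1) * Nat.factorial (j + 1)) := by
      have h1 := Nat.factorial_eq_mul_doubleFactorial (2 * (j + 1))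
      rw [h1, Nat.doubleFactorial_two_mul]
    rw [hfac] at hkey
    have hq : (dStir (2 * (j + 1) + 1) (j + 1) : ℚ) * (3 * (Nat.factorial j * 2 ^ j))
        = (Nat.doubleFactorial (2 * (j + 1) + 1) : ℚ) * (2 ^ (j + 1) * Nat.factorial (j + 1)) := by
      exact_mod_cast congrArg (Nat.cast : ℕ → ℚ) hkey
    have hne : ((3 : ℚ) * (Nat.factorial j * 2 ^ j)) ≠ 0 := by
      positivity
    apply mul_right_cancel₀ hne
    rw [hq, Nat.factorial_succ]
    push_cast
    ring
end

section
/- Let F(x) = ∑_{n≥1} F_n x^n/n! be a formal power series over a commutative ℚ-algebra with F_1 invertible, and set F̂_n = F_{n+1}/((n+1)F_1). Let G(x) = ∑_{n≥1} G_n x^n/n!. Then G(F(x)) = x if and only if G_1 = F_1^{-1} and for all n > 1, G_n = F_1^{-n} · ∑_{k=1}^{n-1} (-1)^k · ((n+k-1)!/k!) · ∑_{j_1+...+j_k = n-1, j_i≥1} ∏_{i=1}^k F̂_{j_i}/(j_i!). -/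
open PowerSeries Finset

section Aux
variable {S : Type*} [CommRing S]

lemma coeff_pow_mul_eq_zero {A : S⟦X⟧} (hA : constantCoeff (R := S) A = 0)
    {k m : ℕ} (hmk : m < k) (h : S⟦X⟧) : coeff (R := S) m (A ^ k * h) = 0 := by
  obtain ⟨B, rfl⟩ := X_dvd_iff.mpr hA
  rw [mul_pow, mul_assoc, coeff_X_pow_mul', if_neg (by omega)]

lemma coeff_pow_eq_zero {A : S⟦X⟧} (hA : constantCoeff (R := S) A = 0)
    {k m : ℕ} (hmk : m < k) : coeff (R := S) m (A ^ k) = 0 := by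
  simpa using coeff_pow_mul_eq_zero hA hmk 1

lemma coeff_mul_congr {B B' : S⟦X⟧} {m : ℕ}
    (hb : ∀ j ≤ m, coeff (R := S) j B = coeff (R := S) j B') (h : S⟦X⟧) :
    coeff (R := S) m (B * h) = coeff (R := S) m (B' * h) := by
  rw [coeff_mul, coeff_mul]
  refine Finset.sum_congr rfl fun p hp => ?_
  rw [Finset.HasAntidiagonal.mem_antidiagonal] at hp
  rw [hb p.1 (by omega)]

lemma sum_square_reindex (M : ℕ) (G : ℕ → ℕ → S)
    (hG : ∀ k l, M < k + l → G k l = 0) :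
    ∑ k ∈ range (M+1), ∑ l ∈ range (M+1), G k l
      = ∑ t ∈ range (M+1), ∑ k ∈ range (t+1), G k (t-k) := by
  rw [← Finset.sum_product']
  have h2 : ∑ t ∈ range (M+1), ∑ k ∈ range (t+1), G k (t-k)
      = ∑ x ∈ (range (M+1)).sigma (fun t => range (t+1)), G x.2 (x.1 - x.2) :=
    (Finset.sum_sigma (range (M+1)) (fun t => range (t+1)) (fun x => G x.2 (x.1 - x.2))).symm
  have h1 : ∑ p ∈ (range (M+1)) ×ˢ (range (M+1)), G p.1 p.2
      = ∑ p ∈ ((range (M+1)) ×ˢ (range (M+1))).filter (fun p => p.1 + p.2 ≤ M), G p.1 p.2 := by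
    refine (Finset.sum_subset (Finset.filter_subset _ _) ?_).symm
    intro p hp hp2
    rw [Finset.mem_filter] at hp2
    push_neg at hp2
    exact hG p.1 p.2 (hp2 hp)
  rw [h1, h2]
  refine Finset.sum_nbij' (fun p => ⟨p.1 + p.2, p.1⟩) (fun x => (x.2, x.1 - x.2)) ?_ ?_ ?_ ?_ ?_
  · intro p hp
    simp only [Finset.mem_filter, Finset.mem_product, Finset.mem_range] at hp
    simp only [Finset.mem_sigma, Finset.mem_range]
    omega
  · intro x hx
    simp only [Finset.mem_sigma, Finset.mem_range] at hx
    simp only [Finset.mem_filter, Finset.mem_product, Finset.mem_range]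
    omega
  · intro p _; simp
  · intro x hx
    simp only [Finset.mem_sigma, Finset.mem_range] at hx
    obtain ⟨t, k⟩ := x
    simp only at hx ⊢
    congr 1
    omega
  · intro p _; simp

/-- Inverse of `1 + A` when `A` has zero constant term, defined coefficientwise
by truncated geometric series. -/
noncomputable def geomInv (A : S⟦X⟧) : S⟦X⟧ :=
  PowerSeries.mk fun m => coeff (R := S) m (∑ k ∈ range (m+1), (-A)^k)

lemma coeff_geomInv_le {A : S⟦X⟧} (hA : constantCoeff (R := S) A = 0) {j N : ℕ} (h : j ≤ N) :
    coeff (R := S) j (geomInv A) = coeff (R := S) j (∑ k ∈ range (N+1), (-A)^k) := by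
  have hA' : constantCoeff (R := S) (-A) = 0 := by rw [map_neg, hA, neg_zero]
  rw [geomInv, coeff_mk, map_sum, map_sum]
  refine Finset.sum_subset ?_ ?_
  · intro x hx
    simp only [Finset.mem_range] at hx ⊢
    omega
  · intro k hk hk'
    simp only [Finset.mem_range] at hk hk'
    exact coeff_pow_eq_zero hA' (by omega)

lemma geomInv_mul {A : S⟦X⟧} (hA : constantCoeff (R := S) A = 0) (m : ℕ) (h : S⟦X⟧) :
    coeff (R := S) m (geomInv A * h)
      = ∑ k ∈ range (m+1), (-1 : S)^k * coeff (R := S) m (A ^ k * h) := by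
  rw [coeff_mul_congr (fun j hj => coeff_geomInv_le hA hj) h, Finset.sum_mul, map_sum]
  refine Finset.sum_congr rfl fun k _ => ?_
  rw [neg_pow, show ((-1 : S⟦X⟧)) = C (R := S) (-1) by simp, ← map_pow, mul_assoc, coeff_C_mul]

lemma one_add_mul_geomInv {A : S⟦X⟧} (hA : constantCoeff (R := S) A = 0) :
    (1 + A) * geomInv A = 1 := by
  ext m
  rw [mul_comm, geomInv_mul hA m (1 + A)]
  have e : ∀ k : ℕ, (-1 : S)^k * coeff (R := S) m (A ^ k * (1 + A))
      = (fun i => (-1:S)^i * coeff (R := S) m (A ^ i)) k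
        - (fun i => (-1:S)^i * coeff (R := S) m (A ^ i)) (k+1) := by
    intro k
    simp only [mul_add, mul_one, pow_succ, map_add]
    ring
  rw [Finset.sum_congr rfl fun k _ => e k, Finset.sum_range_sub']
  simp only [pow_zero, one_mul, pow_zero]
  rw [coeff_pow_eq_zero hA (by omega)]
  simp

lemma hockey (n t : ℕ) : ∑ k ∈ range (t+1), (n+k).choose k = (n+t+1).choose t := by
  induction t with
  | zero => simp
  | succ t ih =>
    rw [Finset.sum_range_succ, ih]
    exact (Nat.choose_succ_succ (n+t+1) t).symm

lemma coeff_geomInv_pow {A : S⟦X⟧} (hA : constantCoeff (R := S) A = 0) (n : ℕ) :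
    ∀ (m : ℕ) (h : S⟦X⟧), coeff (R := S) m ((geomInv A)^(n+1) * h)
      = ∑ k ∈ range (m+1), ((-1:S)^k * ((n+k).choose k : S)) * coeff (R := S) m (A^k * h) := by
  induction n with
  | zero =>
    intro m h
    rw [pow_one, geomInv_mul hA]
    refine Finset.sum_congr rfl fun k _ => ?_
    simp [Nat.choose_self]
  | succ n ih =>
    intro m h
    rw [show (geomInv A)^(n+2) * h = (geomInv A)^(n+1) * (geomInv A * h) by ring, ih m]
    have e1 : ∀ k, coeff (R := S) m (A^k * (geomInv A * h))
        = ∑ l ∈ range (m+1), (-1:S)^l * coeff (R := S) m (A^(k+l) * h) := by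
      intro k
      rw [show A^k * (geomInv A * h) = geomInv A * (A^k * h) by ring, geomInv_mul hA]
      refine Finset.sum_congr rfl fun l _ => ?_
      rw [show A^l * (A^k*h) = A^(k+l)*h by rw [pow_add]; ring]
    calc ∑ k ∈ range (m+1), ((-1:S)^k * ((n+k).choose k : S)) * coeff (R := S) m (A^k * (geomInv A * h))
        = ∑ k ∈ range (m+1), ∑ l ∈ range (m+1),
            ((-1:S)^k * ((n+k).choose k : S)) * ((-1:S)^l * coeff (R := S) m (A^(k+l) * h)) := by
          refine Finset.sum_congr rfl fun k _ => ?_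
          rw [e1 k, Finset.mul_sum]
      _ = ∑ t ∈ range (m+1), ∑ k ∈ range (t+1),
            ((-1:S)^k * ((n+k).choose k : S)) * ((-1:S)^(t-k) * coeff (R := S) m (A^(k+(t-k)) * h)) := by
          refine sum_square_reindex m _ fun k l hkl => ?_
          rw [coeff_pow_mul_eq_zero hA hkl]
          ring
      _ = ∑ t ∈ range (m+1), ((-1:S)^t * ((n+1+t).choose t : S)) * coeff (R := S) m (A^t * h) := by
          refine Finset.sum_congr rfl fun t ht => ?_
          have e2 : ∀ k ∈ range (t+1),
              ((-1:S)^k * ((n+k).choose k : S)) * ((-1:S)^(t-k) * coeff (R := S) m (A^(k+(t-k)) * h))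
              = ((n+k).choose k : S) * ((-1:S)^t * coeff (R := S) m (A^t * h)) := by
            intro k hk
            simp only [Finset.mem_range] at hk
            rw [show k + (t-k) = t by omega]
            rw [show (-1:S)^k * ((n+k).choose k : S) * ((-1:S)^(t-k) * coeff (R := S) m (A^t * h))
              = ((n+k).choose k : S) * (((-1:S)^k * (-1:S)^(t-k)) * coeff (R := S) m (A^t * h)) by ring]
            rw [← pow_add, show k + (t-k) = t by omega]
          rw [Finset.sum_congr rfl e2, ← Finset.sum_mul, ← Nat.cast_sum, hockey]
          rw [show n+t+1 = n+1+t by omega]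
          ring

lemma coeff_pow_comps {A : S⟦X⟧} (hA : constantCoeff (R := S) A = 0) (m k : ℕ) :
    coeff (R := S) m (A^k) = ∑ j ∈ comps m k, ∏ i, coeff (R := S) (j i) A := by
  rw [coeff_pow]
  have hsub : ∑ l ∈ finsuppAntidiag (range k) m, ∏ i ∈ range k, coeff (R := S) (l i) A
      = ∑ l ∈ (finsuppAntidiag (range k) m).filter (fun l => ∀ i ∈ range k, l i ≠ 0),
          ∏ i ∈ range k, coeff (R := S) (l i) A := by
    refine (Finset.sum_subset (Finset.filter_subset _ _) ?_).symm
    intro l hl hl'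
    rw [Finset.mem_filter] at hl'
    push_neg at hl'
    obtain ⟨i, hi, hzero⟩ := hl' hl
    refine Finset.prod_eq_zero hi ?_
    rw [hzero, coeff_zero_eq_constantCoeff]
    exact hA
  rw [hsub]
  refine Finset.sum_nbij' (fun l => fun i : Fin k => l i)
    (fun v => Finsupp.onFinset (range k) (fun i => if h : i < k then v ⟨i, h⟩ else 0)
      (fun i hi => by
        rw [Finset.mem_range]
        by_contra hik
        have hi' : (if h : i < k then v ⟨i, h⟩ else 0) ≠ 0 := hi
        rw [dif_neg hik] at hi'
        exact hi' rfl)) ?_ ?_ ?_ ?_ ?_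
  · intro l hl
    rw [Finset.mem_filter] at hl
    obtain ⟨hl1, hpos⟩ := hl
    rw [mem_finsuppAntidiag] at hl1
    obtain ⟨hsum, hsupp⟩ := hl1
    rw [comps, Finset.mem_filter]
    constructor
    · rw [Fintype.mem_piFinset]
      intro i
      rw [Finset.mem_Icc]
      show 1 ≤ l i.val ∧ l i.val ≤ m
      constructor
      · have := hpos i.val (Finset.mem_range.mpr i.isLt)
        omega
      · calc l i.val ≤ ∑ x ∈ range k, l x :=
              Finset.single_le_sum (fun x _ => Nat.zero_le _) (Finset.mem_range.mpr i.isLt)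
          _ = m := hsum
    · rw [Fin.sum_univ_eq_sum_range (fun i => l i) k]
      exact hsum
  · intro v hv
    rw [comps, Finset.mem_filter, Fintype.mem_piFinset] at hv
    obtain ⟨hmem, hsum⟩ := hv
    rw [Finset.mem_filter]
    constructor
    · rw [mem_finsuppAntidiag]
      refine ⟨?_, Finsupp.support_onFinset_subset⟩
      rw [show (∑ x ∈ range k, (Finsupp.onFinset (range k)
          (fun i => if h : i < k then v ⟨i, h⟩ else 0) _) x) = ∑ x ∈ range k,
          (fun i => if h : i < k then v ⟨i, h⟩ else 0) x from rfl]
      rw [← Fin.sum_univ_eq_sum_range (fun i => if h : i < k then v ⟨i, h⟩ else 0) k]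
      rw [← hsum]
      refine Finset.sum_congr rfl fun i _ => ?_
      rw [dif_pos i.isLt]
    · intro i hi
      rw [Finset.mem_range] at hi
      have h1 := (Finset.mem_Icc.mp (hmem ⟨i, hi⟩)).1
      simp only [Finsupp.onFinset_apply]
      rw [dif_pos hi]
      omega
  · intro l hl
    rw [Finset.mem_filter, mem_finsuppAntidiag] at hl
    ext i
    simp only [Finsupp.onFinset_apply]
    by_cases hik : i < k
    · rw [dif_pos hik]
    · rw [dif_neg hik]
      by_contra hne
      have := hl.1.2 (Finsupp.mem_support_iff.mpr (fun hz => hne hz.symm))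
      exact hik (Finset.mem_range.mp this)
  · intro v _
    funext i
    simp only [Finsupp.onFinset_apply]
    rw [dif_pos i.isLt]
  · intro l _
    rw [← Fin.prod_univ_eq_prod_range (fun i => coeff (R := S) (l i) A) k]

end Aux



section MainAux
variable {R : Type*} [CommRing R] [Algebra ℚ R]

lemma qsmul_cancel {m : ℕ} (hm : m ≠ 0) {a b : R} (h : (m:R) * a = (m:R) * b) : a = b := by
  have h2 : ∀ x : R, algebraMap ℚ R (1/(m:ℚ)) * ((m:R)*x) = x := by
    intro x
    rw [show ((m:R)) = algebraMap ℚ R (m:ℚ) by simp, ← mul_assoc, ← map_mul,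
      one_div, inv_mul_cancel₀ (by exact_mod_cast hm)]
    simp
  calc a = algebraMap ℚ R (1/(m:ℚ)) * ((m:R)*a) := (h2 a).symm
    _ = algebraMap ℚ R (1/(m:ℚ)) * ((m:R)*b) := by rw [h]
    _ = b := h2 b

lemma key_res (g q : R⟦X⟧) (hq : g * q = 1) (m i : ℕ) (hm : 1 ≤ m) :
    (m : R) * coeff (R := R) i (q^(m+1) * d⁄dX R g) = -(((i:ℕ)+1 : ℕ) : R) * coeff (R := R) (i+1) (q^m) := by
  have hDq : d⁄dX R q = -(q^2 * d⁄dX R g) := by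
    have h0 : (d⁄dX R) (g * q) = 0 := by rw [hq]; exact Derivation.map_one_eq_zero _
    rw [Derivation.leibniz] at h0
    have h1 := congrArg (fun z => q * z) h0
    simp only [smul_eq_mul, mul_add, mul_zero] at h1
    calc d⁄dX R q = (g * q) * d⁄dX R q := by rw [hq, one_mul]
      _ = q * (g * (d⁄dX R) q) + (q * (q * (d⁄dX R) g)) - (q * (q * (d⁄dX R) g)) := by ring
      _ = -(q^2 * d⁄dX R g) := by rw [h1]; ring
  have hDqm : d⁄dX R (q^m) = -((m:ℕ) • (q^(m+1) * d⁄dX R g)) := by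
    rw [Derivation.leibniz_pow, hDq]
    simp only [smul_eq_mul]
    rw [show q^(m-1) * -(q^2 * d⁄dX R g) = -((q^(m-1) * q^2) * d⁄dX R g) by ring, ← pow_add,
      show m - 1 + 2 = m + 1 by omega]
    simp [Finset.mul_sum]
  have h2 := congrArg (coeff (R := R) i) hDqm
  rw [coeff_derivative, map_neg, map_nsmul, nsmul_eq_mul] at h2
  push_cast at h2 ⊢
  linear_combination h2

lemma gq_pow (g q : R⟦X⟧) (hq : g * q = 1) {a b : ℕ} (h : a ≤ b) : g^a * q^b = q^(b-a) := by
  rw [show b = a + (b - a) by omega, pow_add, ← mul_assoc, ← mul_pow, hq, one_pow, one_mul,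
    show a + (b-a) - a = b - a by omega]

lemma stepA (g q : R⟦X⟧) (hq : g * q = 1) (a : ℕ → R) (n : ℕ) (hn : 1 ≤ n)
    (H : ∀ m, m ≤ n → coeff (R := R) m (∑ c ∈ Icc 1 m, a c • (X*g)^c) = coeff (R := R) m X) :
    a n = algebraMap ℚ R (1/(n:ℚ)) * coeff (R := R) (n-1) (q^n) := by
  have hD : d⁄dX R (X*g) = g + X * d⁄dX R g := by
    rw [Derivation.leibniz]
    simp only [derivative_X, smul_eq_mul, mul_one]
    ring
  set h : R⟦X⟧ := d⁄dX R (X*g) * q^(n+1) with hh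
  -- extended sums agree coefficientwise up to n
  have h1 : ∀ m, m ≤ n → coeff (R := R) m (∑ c ∈ Icc 1 n, a c • (X*g)^c) = coeff (R := R) m X := by
    intro m hm
    rw [← H m hm, map_sum, map_sum]
    refine (Finset.sum_subset ?_ ?_).symm
    · intro c hc; simp only [Finset.mem_Icc] at hc ⊢; omega
    · intro c hc hc'
      simp only [Finset.mem_Icc] at hc hc'
      rw [PowerSeries.coeff_smul, mul_pow, coeff_X_pow_mul', if_neg (by omega), smul_zero]
  -- multiply by h and take coefficient n
  have h2 : coeff (R := R) n ((∑ c ∈ Icc 1 n, a c • (X*g)^c) * h) = coeff (R := R) n (X * h) :=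
    coeff_mul_congr (fun j hj => by rw [h1 j hj]) h
  -- per-term evaluation
  have h3t : ∀ c, 1 ≤ c → c ≤ n → coeff (R := R) n ((X*g)^c * h) = if c = n then 1 else 0 := by
    intro c hc1 hcn
    have e1 : g^(c+1) * q^(n+1) = q^(n-c) := by
      have := gq_pow g q hq (show c+1 ≤ n+1 by omega)
      rwa [show n+1-(c+1) = n-c by omega] at this
    have e2 : g^c * q^(n+1) = q^(n-c+1) := by
      have := gq_pow g q hq (show c ≤ n+1 by omega)
      rwa [show n+1-c = n-c+1 by omega] at this
    have e : (X*g)^c * h = X^c * q^(n-c) + X^(c+1) * (q^(n-c+1) * d⁄dX R g) := by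
      rw [hh, hD]
      calc (X*g)^c * ((g + X * d⁄dX R g) * q^(n+1))
          = X^c * (g^(c+1) * q^(n+1)) + X^(c+1) * ((g^c * q^(n+1)) * d⁄dX R g) := by ring
        _ = X^c * q^(n-c) + X^(c+1) * (q^(n-c+1) * d⁄dX R g) := by rw [e1, e2]
    rw [e, map_add, coeff_X_pow_mul', if_pos (by omega), coeff_X_pow_mul']
    by_cases hceq : c = n
    · subst hceq
      rw [if_neg (by omega), Nat.sub_self, pow_zero, coeff_zero_eq_constantCoeff, map_one]
      simp
    · have hclt : c < n := by omega
      rw [if_pos (by omega), if_neg hceq]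
      set m := n - c with hm
      have hm1 : 1 ≤ m := by omega
      have hkey := key_res g q hq m (m-1) hm1
      rw [show m - 1 + 1 = m by omega] at hkey
      have hres : coeff (R := R) (m-1) (q^(m+1) * d⁄dX R g) = -(coeff (R := R) m (q^m)) := by
        refine qsmul_cancel (show m ≠ 0 by omega) ?_
        rw [hkey]; push_cast; ring
      rw [show n - (c+1) = m - 1 by omega, show n-c+1 = m+1 by omega, hres]
      ring
  -- LHS equals a n
  have h3 : coeff (R := R) n ((∑ c ∈ Icc 1 n, a c • (X*g)^c) * h) = a n := by
    rw [Finset.sum_mul, map_sum]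
    have hterm : ∀ c ∈ Icc 1 n, coeff (R := R) n (a c • (X*g)^c * h) = if c = n then a c else 0 := by
      intro c hc
      simp only [Finset.mem_Icc] at hc
      rw [smul_mul_assoc, PowerSeries.coeff_smul, smul_eq_mul, h3t c hc.1 hc.2]
      split <;> simp
    rw [Finset.sum_congr rfl hterm, Finset.sum_ite_eq' (Icc 1 n) n a,
      if_pos (by simp only [Finset.mem_Icc]; omega)]
  -- RHS equals (1/n) * coeff (n-1) (q^n)
  have e3 : g * q^(n+1) = q^n := by
    have := gq_pow g q hq (show 1 ≤ n+1 by omega)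
    rwa [pow_one, show n+1-1 = n by omega] at this
  have e4 : X * h = X * q^n + X^2 * (q^(n+1) * d⁄dX R g) := by
    rw [hh, hD]
    calc X * ((g + X * d⁄dX R g) * q^(n+1))
        = X * (g * q^(n+1)) + X^2 * (q^(n+1) * d⁄dX R g) := by ring
      _ = X * q^n + X^2 * (q^(n+1) * d⁄dX R g) := by rw [e3]
  have h4 : coeff (R := R) n (X * h) = algebraMap ℚ R (1/(n:ℚ)) * coeff (R := R) (n-1) (q^n) := by
    have hXq : coeff (R := R) n (X * q^n) = coeff (R := R) (n-1) (q^n) := by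
      have : coeff (R := R) ((n-1)+1) (X * q^n) = coeff (R := R) (n-1) (q^n) := coeff_succ_X_mul _ _
      rwa [show n-1+1 = n by omega] at this
    rw [e4, map_add, hXq, coeff_X_pow_mul']
    rcases eq_or_lt_of_le hn with h1n | h1n
    · rw [if_neg (by omega), ← h1n]
      norm_num
    · rw [if_pos (by omega)]
      have hkey := key_res g q hq n (n-2) (by omega)
      rw [show n - 2 + 1 = n - 1 by omega] at hkey
      refine qsmul_cancel (show n ≠ 0 by omega) ?_
      have hinv : (n:R) * algebraMap ℚ R (1/(n:ℚ)) = 1 := by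
        rw [show ((n:R)) = algebraMap ℚ R (n:ℚ) by simp, ← map_mul]
        rw [mul_one_div, div_self (by exact_mod_cast (show n ≠ 0 by omega))]
        simp
      rw [mul_add, hkey, show (n:R) * (algebraMap ℚ R (1/(n:ℚ)) * coeff (R := R) (n-1) (q^n))
        = ((n:R) * algebraMap ℚ R (1/(n:ℚ))) * coeff (R := R) (n-1) (q^n) by ring, hinv]
      push_cast [show ((n:ℕ) - 2 + 1 : ℕ) = n - 1 by omega]
      rw [show ((n - 1 : ℕ) : R) = (n : R) - 1 by
        have : (1:ℕ) ≤ n := hn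
        push_cast [Nat.cast_sub this]
        ring]
      ring
  rw [h3, h4] at h2
  exact h2

variable (R) in
/-- The shifted series `g` with `f = X * g`. -/
noncomputable def gser (Fc : ℕ → R) : R⟦X⟧ :=
  PowerSeries.mk fun m => algebraMap ℚ R (1/(m+1).factorial) * Fc (m+1)

variable (R) in
/-- `Â = u⁻¹ • g - 1`, the normalized tail. -/
noncomputable def Ahat (Fc : ℕ → R) (u : Rˣ) : R⟦X⟧ := (↑u⁻¹ : R) • gser R Fc - 1

variable (R) in
/-- `q = g⁻¹`. -/
noncomputable def qser (Fc : ℕ → R) (u : Rˣ) : R⟦X⟧ := (↑u⁻¹ : R) • geomInv (Ahat R Fc u)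

variable {Fc : ℕ → R} {u : Rˣ}

lemma Ahat_const (hu : (u : R) = Fc 1) : constantCoeff (R := R) (Ahat R Fc u) = 0 := by
  rw [Ahat, map_sub, map_one, ← coeff_zero_eq_constantCoeff, PowerSeries.coeff_smul, gser,
    coeff_mk, smul_eq_mul]
  simp only [zero_add, Nat.factorial_one, Nat.cast_one, ne_eq, one_ne_zero, not_false_eq_true,
    div_self, map_one, one_mul]
  rw [← hu, Units.inv_mul]
  ring

lemma gser_eq : gser R Fc = (↑u : R) • (1 + Ahat R Fc u) := by
  rw [Ahat]
  rw [show (1 : R⟦X⟧) + ((↑u⁻¹ : R) • gser R Fc - 1) = (↑u⁻¹ : R) • gser R Fc by ring,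
    smul_smul, Units.mul_inv, one_smul]

lemma gser_mul_qser (hu : (u : R) = Fc 1) : gser R Fc * qser R Fc u = 1 := by
  rw [gser_eq (u := u), qser, smul_mul_assoc, mul_smul_comm, smul_smul, Units.mul_inv,
    one_smul, one_add_mul_geomInv (Ahat_const hu)]

lemma qser_const (hu : (u : R) = Fc 1) : coeff (R := R) 0 (qser R Fc u) = (↑u⁻¹ : R) := by
  rw [qser, PowerSeries.coeff_smul, coeff_geomInv_le (Ahat_const hu) (Nat.le_refl 0),
    Finset.sum_range_one, pow_zero, smul_eq_mul]
  simp

lemma fser_eq : (PowerSeries.mk fun m : ℕ =>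
      if m = 0 then 0 else algebraMap ℚ R (1 / m.factorial) * Fc m) = X * gser R Fc := by
  ext m
  cases m with
  | zero => simp [coeff_mk]
  | succ m =>
    rw [coeff_mk, coeff_succ_X_mul, gser, coeff_mk, if_neg (Nat.succ_ne_zero m)]

lemma coeff_Ahat {j : ℕ} (hj : 1 ≤ j) :
    coeff (R := R) j (Ahat R Fc u) = algebraMap ℚ R (1 / (j+1).factorial) * Fc (j+1) * (↑u⁻¹ : R) := by
  rw [Ahat, map_sub, PowerSeries.coeff_smul, gser, coeff_mk, coeff_one, if_neg (by omega),
    smul_eq_mul]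
  ring

/-- Step B: the explicit combinatorial formula for `coeff (n-1) (q^n)`. -/
lemma stepB (hu : (u : R) = Fc 1) {n : ℕ} (hn : 2 ≤ n) :
    (↑u⁻¹:R)^n * ∑ k ∈ Icc 1 (n-1),
        (-1:R)^k * algebraMap ℚ R (((n+k-1).factorial : ℚ) / k.factorial) *
          ∑ j ∈ comps (n-1) k, ∏ i,
            algebraMap ℚ R (1 / ((j i) + 1).factorial) * Fc ((j i) + 1) * (↑u⁻¹ : R)
      = algebraMap ℚ R ((n-1).factorial : ℚ) * coeff (R := R) (n-1) ((qser R Fc u)^n) := by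
  have hA0 := Ahat_const hu
  set A := Ahat R Fc u with hA
  -- coefficient of q^n
  have e1 : coeff (R := R) (n-1) ((qser R Fc u)^n)
      = (↑u⁻¹:R)^n * coeff (R := R) (n-1) ((geomInv A)^n) := by
    rw [qser, smul_pow, PowerSeries.coeff_smul, smul_eq_mul]
  have e2 : coeff (R := R) (n-1) ((geomInv A)^n)
      = ∑ k ∈ range n, ((-1:R)^k * (((n-1)+k).choose k : R)) * coeff (R := R) (n-1) (A^k) := by
    have h0 := coeff_geomInv_pow hA0 (n-1) (n-1) 1
    rw [show (n-1)+1 = n by omega] at h0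
    simpa using h0
  have e3 : ∑ k ∈ range n, ((-1:R)^k * (((n-1)+k).choose k : R)) * coeff (R := R) (n-1) (A^k)
      = ∑ k ∈ Icc 1 (n-1), ((-1:R)^k * (((n-1)+k).choose k : R)) * coeff (R := R) (n-1) (A^k) := by
    refine (Finset.sum_subset ?_ ?_).symm
    · intro k hk
      simp only [Finset.mem_Icc] at hk
      simp only [Finset.mem_range]
      omega
    · intro k hk hk'
      simp only [Finset.mem_range] at hk
      simp only [Finset.mem_Icc] at hk'
      have hk0 : k = 0 := by omega
      subst hk0
      simp [coeff_one, show ¬(n-1 = 0) by omega]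
  have e4 : ∀ k ∈ Icc 1 (n-1),
      (↑u⁻¹:R)^n * ((-1:R)^k * algebraMap ℚ R (((n+k-1).factorial : ℚ) / k.factorial) *
          ∑ j ∈ comps (n-1) k, ∏ i,
            algebraMap ℚ R (1 / ((j i) + 1).factorial) * Fc ((j i) + 1) * (↑u⁻¹ : R))
      = algebraMap ℚ R ((n-1).factorial : ℚ) *
          ((↑u⁻¹:R)^n * (((-1:R)^k * (((n-1)+k).choose k : R)) * coeff (R := R) (n-1) (A^k))) := by
    intro k hk
    have hprod : coeff (R := R) (n-1) (A^k) = ∑ j ∈ comps (n-1) k, ∏ i,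
        algebraMap ℚ R (1 / ((j i) + 1).factorial) * Fc ((j i) + 1) * (↑u⁻¹ : R) := by
      rw [coeff_pow_comps hA0]
      refine Finset.sum_congr rfl fun j hj => ?_
      rw [comps, Finset.mem_filter, Fintype.mem_piFinset] at hj
      refine Finset.prod_congr rfl fun i _ => ?_
      exact coeff_Ahat (Finset.mem_Icc.mp (hj.1 i)).1
    have hnat : (n-1+k).choose k * k.factorial * (n-1).factorial = (n-1+k).factorial := by
      have h := Nat.choose_mul_factorial_mul_factorial (show k ≤ n-1+k by omega)
      rwa [show n-1+k-k = n-1 by omega] at h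
    have halg : algebraMap ℚ R (((n+k-1).factorial : ℚ)/(k.factorial : ℚ))
        = algebraMap ℚ R ((n-1).factorial : ℚ) * (((n-1)+k).choose k : R) := by
      rw [show ((((n-1)+k).choose k : ℕ) : R) = algebraMap ℚ R ((((n-1)+k).choose k : ℕ) : ℚ)
        from (map_natCast _ _).symm, ← map_mul]
      congr 1
      rw [div_eq_iff (by exact_mod_cast k.factorial_ne_zero), show n+k-1 = n-1+k by omega]
      push_cast [← hnat]
      ring
    rw [hprod, halg]
    ring
  rw [e1, e2, e3, Finset.mul_sum, Finset.sum_congr rfl e4, ← Finset.mul_sum, ← Finset.mul_sum]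

lemma gser_const (hu : (u : R) = Fc 1) : constantCoeff (R := R) (gser R Fc) = (↑u : R) := by
  rw [← coeff_zero_eq_constantCoeff, gser, coeff_mk, hu]
  simp

lemma existsSol (hu : (u : R) = Fc 1) (N : ℕ) :
    ∃ a : ℕ → R, ∀ m ≤ N, coeff (R := R) m (∑ c ∈ Icc 1 m, a c • (X * gser R Fc)^c) = coeff (R := R) m X := by
  induction N with
  | zero =>
    refine ⟨fun _ => 0, ?_⟩
    intro m hm
    have hm0 : m = 0 := by omega
    subst hm0
    rw [show Icc 1 0 = (∅ : Finset ℕ) from Finset.Icc_eq_empty (by omega)]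
    simp
  | succ N ih =>
    obtain ⟨a, ha⟩ := ih
    set v : R := (↑u⁻¹:R)^(N+1) * (coeff (R := R) (N+1) X
      - coeff (R := R) (N+1) (∑ c ∈ Icc 1 N, a c • (X * gser R Fc)^c)) with hv
    refine ⟨Function.update a (N+1) v, ?_⟩
    intro m hm
    rcases Nat.lt_or_ge m (N+1) with hmN | hmN
    · rw [← ha m (by omega)]
      congr 1
      refine Finset.sum_congr rfl fun c hc => ?_
      simp only [Finset.mem_Icc] at hc
      rw [Function.update_of_ne (by omega)]
    · have hm1 : m = N+1 := by omega
      subst hm1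
      rw [show Icc 1 (N+1) = insert (N+1) (Icc 1 N) from
          (Finset.insert_Icc_right_eq_Icc_add_one (by omega)).symm,
        Finset.sum_insert (by simp only [Finset.mem_Icc]; omega), map_add,
        Function.update_self]
      have hrest : ∑ c ∈ Icc 1 N, (Function.update a (N+1) v) c • (X * gser R Fc)^c
          = ∑ c ∈ Icc 1 N, a c • (X * gser R Fc)^c := by
        refine Finset.sum_congr rfl fun c hc => ?_
        simp only [Finset.mem_Icc] at hc
        rw [Function.update_of_ne (by omega)]
      have hcoeff : coeff (R := R) (N+1) ((X * gser R Fc)^(N+1)) = (↑u:R)^(N+1) := by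
        rw [mul_pow, coeff_X_pow_mul', if_pos (le_refl _), Nat.sub_self,
          coeff_zero_eq_constantCoeff, map_pow, gser_const hu]
      rw [hrest, PowerSeries.coeff_smul, smul_eq_mul, hcoeff]
      have huu : (↑u⁻¹:R)^(N+1) * (↑u:R)^(N+1) = 1 := by
        rw [← mul_pow, Units.inv_mul, one_pow]
      have hveq : v * (↑u:R)^(N+1) = coeff (R := R) (N+1) X
          - coeff (R := R) (N+1) (∑ c ∈ Icc 1 N, a c • (X * gser R Fc)^c) := by
        rw [hv]
        linear_combination (coeff (R := R) (N+1) X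
          - coeff (R := R) (N+1) (∑ c ∈ Icc 1 N, a c • (X * gser R Fc)^c)) * huu
      rw [hveq]
      ring

end MainAux

/-- Lagrange inversion: with `F(x) = ∑_{n≥1} Fc n • x^n/n!` (`Fc 1` a unit `u`) and
`G(x) = ∑_{n≥1} Gc n • x^n/n!`, the identity `G(F(x)) = x` (stated coefficientwise) holds
iff `Gc 1 = u⁻¹` and for `n > 1`,
`Gc n = u⁻ⁿ ∑_{k=1}^{n-1} (-1)^k ((n+k-1)!/k!) ∑_{j₁+⋯+j_k=n-1} ∏ F̂_{jᵢ}/jᵢ!`,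
where `F̂_j = F_{j+1}/((j+1) F₁)`. -/
theorem stmt10 (R : Type*) [CommRing R] [Algebra ℚ R] (Fc Gc : ℕ → R) (u : Rˣ)
    (hu : (u : R) = Fc 1) :
    (∀ n : ℕ,
      PowerSeries.coeff (R := R) n
        (∑ c ∈ Finset.Icc 1 n,
          (algebraMap ℚ R (1 / c.factorial) * Gc c) •
            (PowerSeries.mk fun m : ℕ =>
              if m = 0 then 0 else algebraMap ℚ R (1 / m.factorial) * Fc m) ^ c)
        = PowerSeries.coeff (R := R) n PowerSeries.X)
    ↔ (Gc 1 = (↑u⁻¹ : R) ∧ ∀ n : ℕ, 1 < n →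
        Gc n = (↑u⁻¹ : R) ^ n *
          ∑ k ∈ Finset.Icc 1 (n - 1),
            (-1 : R) ^ k * algebraMap ℚ R (((n + k - 1).factorial : ℚ) / k.factorial) *
              ∑ j ∈ comps (n - 1) k, ∏ i,
                algebraMap ℚ R (1 / ((j i) + 1).factorial) * Fc ((j i) + 1) * (↑u⁻¹ : R)) := by
  rw [fser_eq (Fc := Fc)]
  have hgq := gser_mul_qser hu
  constructor
  · intro H
    have hstep : ∀ n, 1 ≤ n → algebraMap ℚ R (1 / (n.factorial : ℚ)) * Gc n
        = algebraMap ℚ R (1/(n:ℚ)) * coeff (R := R) (n-1) ((qser R Fc u)^n) := by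
      intro n hn
      exact stepA (gser R Fc) (qser R Fc u) hgq
        (fun c => algebraMap ℚ R (1 / (c.factorial : ℚ)) * Gc c) n hn (fun m _ => H m)
    constructor
    · have h1 := hstep 1 (le_refl 1)
      simp only [Nat.factorial_one, Nat.cast_one] at h1
      rw [show ((1:ℕ) - 1) = 0 from rfl, pow_one, qser_const hu] at h1
      simpa using h1
    · intro n hn
      have h2 := hstep n (by omega)
      have hcancel : algebraMap ℚ R ((n.factorial : ℚ))
          * (algebraMap ℚ R (1 / (n.factorial : ℚ)) * Gc n) = Gc n := by
        rw [← mul_assoc, ← map_mul, mul_one_div,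
          div_self (by exact_mod_cast n.factorial_ne_zero), map_one, one_mul]
      have hfac : algebraMap ℚ R ((n.factorial : ℚ)) * algebraMap ℚ R (1/(n:ℚ))
          = algebraMap ℚ R (((n-1).factorial : ℚ)) := by
        rw [← map_mul]
        congr 1
        have hmf : (n-1).factorial * n = n.factorial := by
          rw [mul_comm]
          exact Nat.mul_factorial_pred (show n ≠ 0 by omega)
        rw [mul_one_div, div_eq_iff (by exact_mod_cast (show n ≠ 0 by omega))]
        exact_mod_cast hmf.symm

      calc Gc n = algebraMap ℚ R ((n.factorial : ℚ))
            * (algebraMap ℚ R (1 / (n.factorial : ℚ)) * Gc n) := hcancel.symm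
        _ = algebraMap ℚ R ((n.factorial : ℚ))
            * (algebraMap ℚ R (1/(n:ℚ)) * coeff (R := R) (n-1) ((qser R Fc u)^n)) := by rw [h2]
        _ = algebraMap ℚ R (((n-1).factorial : ℚ)) * coeff (R := R) (n-1) ((qser R Fc u)^n) := by
            rw [← mul_assoc, hfac]
        _ = _ := (stepB hu (by omega)).symm
  · rintro ⟨h1, h2⟩ n
    obtain ⟨a, ha⟩ := existsSol hu n
    have haW : ∀ c, 1 ≤ c → c ≤ n →
        a c = algebraMap ℚ R (1/(c:ℚ)) * coeff (R := R) (c-1) ((qser R Fc u)^c) :=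
      fun c hc1 hcn => stepA (gser R Fc) (qser R Fc u) hgq a c hc1
        (fun m hm => ha m (le_trans hm hcn))
    have hGW : ∀ c, 1 ≤ c → c ≤ n → algebraMap ℚ R (1 / (c.factorial : ℚ)) * Gc c = a c := by
      intro c hc1 hcn
      rw [haW c hc1 hcn]
      rcases eq_or_lt_of_le hc1 with hc | hc
      · rw [← hc]
        simp only [Nat.factorial_one, Nat.cast_one]
        rw [show ((1:ℕ) - 1) = 0 from rfl, pow_one, qser_const hu, h1]
      · rw [h2 c hc, stepB hu (by omega)]
        have hmf : (c-1).factorial * c = c.factorial := by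
          rw [mul_comm]
          exact Nat.mul_factorial_pred (show c ≠ 0 by omega)
        rw [← mul_assoc, ← map_mul]
        congr 2
        rw [div_mul_eq_mul_div, one_mul,
          div_eq_div_iff (by exact_mod_cast c.factorial_ne_zero)
            (by exact_mod_cast (show c ≠ 0 by omega))]
        push_cast
        rw [one_mul]
        exact_mod_cast hmf

    rw [← ha n (le_refl n)]
    exact congrArg _ (Finset.sum_congr rfl fun c hc => by
      rw [Finset.mem_Icc] at hc
      rw [hGW c hc.1 hc.2])
end
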